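/- Let α = (i^a) and α' = (j^b) be rectangular partitions. For any partition ν with c^ν_{(i^a),(i^a)} = 1, exactly one of the two conditions (1) c^ν_{((i+1)^a),((i-1)^a)} = 1 and (2) c^ν_{(i^{a+1}),(i^{a-1})} = 1 holds; that is, c^ν_{((i-1)^a),((i+1)^a)} = 1 if and only if c^ν_{(i^{a-1}),(i^{a+1})} = 0. -/

import Mathlib

/-- The rectangular partition `(w^h)`: `h` rows of length `w` (rows indexed from 0,
French convention with row 0 at the bottom). -/
def rect (w h : ℕ) : ℕ → ℕ := fun r => if r < h then w else 0

/-- The content of the rectangular partition `(w^h)`, as a function on letters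
`k ≥ 1`: letters `1,…,h` each occur `w` times. -/
def rectContent (w h : ℕ) : ℕ → ℕ := fun k => if 1 ≤ k ∧ k ≤ h then w else 0

/-- The cells of the skew shape `β/α`. -/
def SkewCell (α β : ℕ → ℕ) (r c : ℕ) : Prop := α r ≤ c ∧ c < β r

/-- `T : ℕ → ℕ → ℕ` is a Littlewood–Richardson skew tableau of shape `β/α` and content
`γ`: it is supported on the cells of `β/α` with entries `≥ 1`, rows weakly increase,
columns strictly increase (bottom to top), the number of entries `k` is `γ k`, and the
lattice (Yamanouchi) condition holds: for every `i` and `k ≥ 1`, the number of entries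
`k+1` in rows `≤ i` is at most the number of entries `k` in rows `≤ i-1`. -/
def IsLRTab (α β γ : ℕ → ℕ) (T : ℕ → ℕ → ℕ) : Prop :=
  (∀ r, α r ≤ β r) ∧
  (∀ r c, ¬ SkewCell α β r c → T r c = 0) ∧
  (∀ r c, SkewCell α β r c → 1 ≤ T r c) ∧
  (∀ r c, SkewCell α β r c → SkewCell α β r (c + 1) → T r c ≤ T r (c + 1)) ∧
  (∀ r c, SkewCell α β r c → SkewCell α β (r + 1) c → T r c < T (r + 1) c) ∧
  (∀ k, 1 ≤ k →
    Set.ncard {p : ℕ × ℕ | SkewCell α β p.1 p.2 ∧ T p.1 p.2 = k} = γ k) ∧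
  (∀ i k, 1 ≤ k →
    Set.ncard {p : ℕ × ℕ | p.1 ≤ i ∧ SkewCell α β p.1 p.2 ∧ T p.1 p.2 = k + 1} ≤
      Set.ncard {p : ℕ × ℕ | p.1 + 1 ≤ i ∧ SkewCell α β p.1 p.2 ∧ T p.1 p.2 = k})

/-- The Littlewood–Richardson coefficient `c^β_{α,γ}`: the number of LR skew tableaux
of shape `β/α` and content `γ`. -/
noncomputable def lrCoeff (α γ β : ℕ → ℕ) : ℕ :=
  Set.ncard {T : ℕ → ℕ → ℕ | IsLRTab α β γ T}

namespace LRD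

/-! ### Counting infrastructure -/

lemma ncard_fiber {X : Type*} {P : Set X} (hP : P.Finite) (f : X → ℕ) (K : Finset ℕ)
    (h : ∀ x ∈ P, f x ∈ K) : P.ncard = ∑ k ∈ K, {x ∈ P | f x = k}.ncard := by
  classical
  have h1 : P.ncard = hP.toFinset.card := by
    rw [← Set.ncard_coe_finset, hP.coe_toFinset]
  rw [h1, Finset.card_eq_sum_card_fiberwise (t := K) (f := f)
    (by intro x hx; exact h x (hP.mem_toFinset.mp hx))]
  refine Finset.sum_congr rfl fun k _ => ?_
  rw [← Set.ncard_coe_finset]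
  congr 1
  ext x
  simp only [Set.mem_setOf_eq, Finset.coe_filter, hP.mem_toFinset]

lemma setOf_lt_ncard (n : ℕ) : {c : ℕ | c < n}.ncard = n := by
  rw [show {c : ℕ | c < n} = ↑(Finset.range n) by ext c; simp]
  rw [Set.ncard_coe_finset]; simp

lemma setOf_Ico_ncard (a b : ℕ) : {c : ℕ | a ≤ c ∧ c < b}.ncard = b - a := by
  rw [show {c : ℕ | a ≤ c ∧ c < b} = ↑(Finset.Ico a b) by ext c; simp]
  rw [Set.ncard_coe_finset]; simp

lemma fin_of_lt {P : Set ℕ} (n : ℕ) (h : ∀ c ∈ P, c < n) : P.Finite :=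
  Set.Finite.subset (Finset.range n).finite_toSet (by intro c hc; simp [h c hc])

/-- slice of a planar set at a fixed row -/
lemma row_slice_ncard (Q : ℕ → ℕ → Prop) (r : ℕ) :
    {p : ℕ × ℕ | p.1 = r ∧ Q p.1 p.2}.ncard = {c : ℕ | Q r c}.ncard := by
  have : {p : ℕ × ℕ | p.1 = r ∧ Q p.1 p.2} = (fun c => (r, c)) '' {c : ℕ | Q r c} := by
    ext ⟨x, y⟩
    constructor
    · rintro ⟨rfl, hq⟩; exact ⟨y, hq, rfl⟩
    · rintro ⟨c, hc, h⟩; cases h; exact ⟨rfl, hc⟩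
  rw [this, Set.ncard_image_of_injective _ (fun x y hxy => by simpa using hxy)]

lemma col_slice_ncard (Q : ℕ → ℕ → Prop) (c : ℕ) :
    {p : ℕ × ℕ | p.2 = c ∧ Q p.1 p.2}.ncard = {r : ℕ | Q r c}.ncard := by
  have : {p : ℕ × ℕ | p.2 = c ∧ Q p.1 p.2} = (fun r => (r, c)) '' {r : ℕ | Q r c} := by
    ext ⟨x, y⟩
    constructor
    · rintro ⟨rfl, hq⟩; exact ⟨x, hq, rfl⟩
    · rintro ⟨rr, hc, h⟩; cases h; exact ⟨rfl, hc⟩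
  rw [this, Set.ncard_image_of_injective _ (fun x y hxy => by simpa using hxy)]

/-- decompose a finite planar set by rows -/
lemma ncard_rows {P : Set (ℕ × ℕ)} (hP : P.Finite) (R : ℕ) (h : ∀ p ∈ P, p.1 < R) :
    P.ncard = ∑ r ∈ Finset.range R, {c : ℕ | (r, c) ∈ P}.ncard := by
  rw [ncard_fiber hP (fun p => p.1) (Finset.range R) (by intro x hx; simpa using h x hx)]
  refine Finset.sum_congr rfl fun r _ => ?_
  rw [show {x ∈ P | x.1 = r} = {p : ℕ × ℕ | p.1 = r ∧ p ∈ P} by ext p; simp; tauto]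
  rw [row_slice_ncard (fun a b => (a, b) ∈ P) r]

/-- decompose a finite planar set by columns -/
lemma ncard_cols {P : Set (ℕ × ℕ)} (hP : P.Finite) (C : ℕ) (h : ∀ p ∈ P, p.2 < C) :
    P.ncard = ∑ c ∈ Finset.range C, {r : ℕ | (r, c) ∈ P}.ncard := by
  rw [ncard_fiber hP (fun p => p.2) (Finset.range C) (by intro x hx; simpa using h x hx)]
  refine Finset.sum_congr rfl fun c _ => ?_
  rw [show {x ∈ P | x.2 = c} = {p : ℕ × ℕ | p.2 = c ∧ p ∈ P} by ext p; simp; tauto]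
  rw [col_slice_ncard (fun a b => (a, b) ∈ P) c]

section Generic
variable {w q wc h : ℕ} {ν : ℕ → ℕ} {γ : ℕ → ℕ} {T : ℕ → ℕ → ℕ}

lemma cell_iff {r c : ℕ} : SkewCell (rect w q) ν r c ↔ (w ≤ c ∨ q ≤ r) ∧ c < ν r := by
  unfold SkewCell rect
  by_cases hr : r < q
  · simp only [if_pos hr]
    constructor
    · rintro ⟨h1, h2⟩; exact ⟨Or.inl h1, h2⟩
    · rintro ⟨h1, h2⟩
      refine ⟨?_, h2⟩
      rcases h1 with h1 | h1
      · exact h1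
      · omega
  · simp only [if_neg hr]
    exact ⟨fun ⟨h1, h2⟩ => ⟨Or.inr (by omega), h2⟩, fun ⟨h1, h2⟩ => ⟨Nat.zero_le c, h2⟩⟩

lemma cell_between (hν : Antitone ν) {r₁ r₂ r c : ℕ}
    (h1 : SkewCell (rect w q) ν r₁ c) (h2 : SkewCell (rect w q) ν r₂ c)
    (ha : r₁ ≤ r) (hb : r ≤ r₂) : SkewCell (rect w q) ν r c := by
  rw [cell_iff] at *
  refine ⟨?_, lt_of_lt_of_le h2.2 (hν hb)⟩
  rcases h1.1 with hh | hh
  · exact Or.inl hh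
  · exact Or.inr (by omega)

lemma chain (hT : IsLRTab (rect w q) ν γ T) (hν : Antitone ν) :
    ∀ d r c, SkewCell (rect w q) ν r c → SkewCell (rect w q) ν (r + d) c →
      T r c + d ≤ T (r + d) c := by
  intro d
  induction d with
  | zero => intro r c _ _; simp
  | succ d ih =>
    intro r c h1 h2
    have hmid : SkewCell (rect w q) ν (r + d) c := cell_between hν h1 h2 (by omega) (by omega)
    rw [show r + (d + 1) = r + d + 1 by ring]
    have hs := hT.2.2.2.2.1 (r + d) c hmid (by rw [show r + d + 1 = r + (d + 1) by ring]; exact h2)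
    have := ih r c h1 hmid
    omega

lemma chain' (hT : IsLRTab (rect w q) ν γ T) (hν : Antitone ν) {r₁ r₂ c : ℕ}
    (h1 : SkewCell (rect w q) ν r₁ c) (h2 : SkewCell (rect w q) ν r₂ c) (hle : r₁ ≤ r₂) :
    T r₁ c + (r₂ - r₁) ≤ T r₂ c := by
  have := chain hT hν (r₂ - r₁) r₁ c h1 (by rw [show r₁ + (r₂ - r₁) = r₂ by omega]; exact h2)
  rw [show r₁ + (r₂ - r₁) = r₂ by omega] at this
  omega

lemma fin_planar (hν : Antitone ν) {M : ℕ} (hM : ∀ r, M ≤ r → ν r = 0)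
    {P : Set (ℕ × ℕ)} (h : ∀ p ∈ P, p.2 < ν p.1) : P.Finite := by
  apply Set.Finite.subset ((Finset.range M ×ˢ Finset.range (ν 0)).finite_toSet)
  intro p hp
  have h2 := h p hp
  have hr : p.1 < M := by
    by_contra hc
    have := hM p.1 (by omega)
    omega
  have : ν p.1 ≤ ν 0 := hν (Nat.zero_le _)
  simp only [Finset.coe_product, Set.mem_prod, Finset.coe_range, Set.mem_Iio]
  omega

lemma T_le (hT : IsLRTab (rect w q) ν (rectContent wc h) T) (hν : Antitone ν)
    {M : ℕ} (hM : ∀ r, M ≤ r → ν r = 0) {r c : ℕ}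
    (hc : SkewCell (rect w q) ν r c) : T r c ≤ h := by
  by_contra hgt
  have h1 := hT.2.2.2.2.2.1 (T r c) (hT.2.2.1 r c hc)
  have h0 : rectContent wc h (T r c) = 0 := by unfold rectContent; rw [if_neg]; omega
  rw [h0] at h1
  have hfin : {p : ℕ × ℕ | SkewCell (rect w q) ν p.1 p.2 ∧ T p.1 p.2 = T r c}.Finite :=
    fin_planar hν hM (by rintro p ⟨hp, _⟩; exact hp.2)
  have hmem : (r, c) ∈ {p : ℕ × ℕ | SkewCell (rect w q) ν p.1 p.2 ∧ T p.1 p.2 = T r c} :=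
    ⟨hc, rfl⟩
  have := (Set.ncard_pos hfin).mpr ⟨_, hmem⟩
  omega

lemma letter_le_row (hT : IsLRTab (rect w q) ν γ T) (hν : Antitone ν)
    {M : ℕ} (hM : ∀ r, M ≤ r → ν r = 0) :
    ∀ m, 1 ≤ m → ∀ ρ,
      ({p : ℕ × ℕ | p.1 ≤ ρ ∧ SkewCell (rect w q) ν p.1 p.2 ∧ T p.1 p.2 = m}).Nonempty →
      m ≤ ρ + 1 := by
  intro m
  induction m with
  | zero => omega
  | succ m ih =>
    intro hm ρ hne
    by_cases h1 : m = 0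
    · omega
    have hm1 : 1 ≤ m := by omega
    have hfin : ({p : ℕ × ℕ | p.1 ≤ ρ ∧ SkewCell (rect w q) ν p.1 p.2 ∧
        T p.1 p.2 = m + 1}).Finite := fin_planar hν hM (by rintro p ⟨_, hp, _⟩; exact hp.2)
    have hcard := (Set.ncard_pos hfin).mpr hne
    have hl := hT.2.2.2.2.2.2 ρ m hm1
    have hner : ({p : ℕ × ℕ | p.1 + 1 ≤ ρ ∧ SkewCell (rect w q) ν p.1 p.2 ∧
        T p.1 p.2 = m}).Nonempty := by
      apply Set.nonempty_of_ncard_ne_zero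
      omega
    obtain ⟨p, hp1, hp2, hp3⟩ := hner
    have hne2 : ({p : ℕ × ℕ | p.1 ≤ ρ - 1 ∧ SkewCell (rect w q) ν p.1 p.2 ∧
        T p.1 p.2 = m}).Nonempty := ⟨p, by omega, hp2, hp3⟩
    have := ih hm1 (ρ - 1) hne2
    omega

lemma cell_letter_le_row (hT : IsLRTab (rect w q) ν γ T) (hν : Antitone ν)
    {M : ℕ} (hM : ∀ r, M ≤ r → ν r = 0) {r c : ℕ}
    (hc : SkewCell (rect w q) ν r c) : T r c ≤ r + 1 := by
  have h1 := hT.2.2.1 r c hc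
  exact letter_le_row hT hν hM (T r c) h1 r ⟨(r, c), le_refl r, hc, rfl⟩

/-! row counts -/

noncomputable def rowc (w q : ℕ) (ν : ℕ → ℕ) (T : ℕ → ℕ → ℕ) (r k : ℕ) : ℕ :=
  {c : ℕ | SkewCell (rect w q) ν r c ∧ T r c = k}.ncard

lemma rowc_fin (r k : ℕ) : {c : ℕ | SkewCell (rect w q) ν r c ∧ T r c = k}.Finite :=
  fin_of_lt (ν r) (fun c hc => hc.1.2)

lemma Ncnt_rows (hν : Antitone ν) {M : ℕ} (hM : ∀ r, M ≤ r → ν r = 0) (ρ k : ℕ) :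
    {p : ℕ × ℕ | p.1 ≤ ρ ∧ SkewCell (rect w q) ν p.1 p.2 ∧ T p.1 p.2 = k}.ncard
      = ∑ r ∈ Finset.range (ρ + 1), rowc w q ν T r k := by
  rw [ncard_rows (fin_planar hν hM (by rintro p ⟨_, hp, _⟩; exact hp.2)) (ρ + 1)
    (by rintro p ⟨hp, _⟩; omega)]
  refine Finset.sum_congr rfl fun r hr => ?_
  simp only [Finset.mem_range] at hr
  unfold rowc
  congr 1
  ext c
  simp only [Set.mem_setOf_eq]
  constructor
  · rintro ⟨_, hc, ht⟩; exact ⟨hc, ht⟩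
  · rintro ⟨hc, ht⟩; exact ⟨by omega, hc, ht⟩

lemma content_rows (hT : IsLRTab (rect w q) ν γ T) (hν : Antitone ν)
    {k : ℕ} (hk : 1 ≤ k) {R : ℕ} (hR : ∀ r, R ≤ r → ν r = 0) (hR1 : 1 ≤ R) :
    ∑ r ∈ Finset.range R, rowc w q ν T r k = γ k := by
  have h2 := Ncnt_rows (w := w) (q := q) (T := T) (M := R) hν hR (R - 1) k
  have hset : {p : ℕ × ℕ | SkewCell (rect w q) ν p.1 p.2 ∧ T p.1 p.2 = k}
      = {p : ℕ × ℕ | p.1 ≤ R - 1 ∧ SkewCell (rect w q) ν p.1 p.2 ∧ T p.1 p.2 = k} := by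
    ext p
    simp only [Set.mem_setOf_eq]
    constructor
    · rintro ⟨hc, ht⟩
      refine ⟨?_, hc, ht⟩
      have := hc.2
      by_contra hcon
      have := hR p.1 (by omega)
      omega
    · rintro ⟨_, hc, ht⟩; exact ⟨hc, ht⟩
  rw [← hT.2.2.2.2.2.1 k hk, hset, h2, show R - 1 + 1 = R by omega]

lemma rowcells_ncard (r : ℕ) : {c : ℕ | SkewCell (rect w q) ν r c}.ncard
    = ν r - rect w q r := by
  unfold SkewCell
  rcases le_or_gt (rect w q r) (ν r) with hle | hlt
  · exact setOf_Ico_ncard _ _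
  · rw [show {c : ℕ | rect w q r ≤ c ∧ c < ν r} = ∅ by ext c; simp; omega]
    simp
    omega

lemma row_val_sum (hT : IsLRTab (rect w q) ν (rectContent wc h) T) (hν : Antitone ν)
    {M : ℕ} (hM : ∀ r, M ≤ r → ν r = 0) (r : ℕ) :
    ∑ k ∈ Finset.Icc 1 h, rowc w q ν T r k = ν r - rect w q r := by
  rw [← rowcells_ncard (w := w) (q := q) (ν := ν) r]
  rw [ncard_fiber (fin_of_lt (ν r) (fun c hc => hc.2)) (T r) (Finset.Icc 1 h)
    (by intro c hc
        simp only [Finset.mem_Icc]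
        exact ⟨hT.2.2.1 r c hc, T_le hT hν hM hc⟩)]
  rfl

lemma rowc_zero (r k : ℕ) (hno : ∀ c, SkewCell (rect w q) ν r c → T r c ≠ k) :
    rowc w q ν T r k = 0 := by
  unfold rowc
  rw [show {c : ℕ | SkewCell (rect w q) ν r c ∧ T r c = k} = ∅ by
    ext c; simp only [Set.mem_setOf_eq, Set.mem_empty_iff_false, iff_false, not_and]
    exact hno c]
  simp

lemma rowc_full (r k : ℕ) (hall : ∀ c, SkewCell (rect w q) ν r c → T r c = k) :
    rowc w q ν T r k = ν r - rect w q r := by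
  unfold rowc
  rw [show {c : ℕ | SkewCell (rect w q) ν r c ∧ T r c = k}
      = {c : ℕ | SkewCell (rect w q) ν r c} by
    ext c; simp only [Set.mem_setOf_eq, and_iff_left_iff_imp]; exact hall c]
  exact rowcells_ncard r

lemma rowc_empty_row (r k : ℕ) (hr : ν r ≤ rect w q r) : rowc w q ν T r k = 0 := by
  apply rowc_zero
  intro c hc
  exfalso
  have := hc.1
  have := hc.2
  unfold SkewCell at hc
  omega

end Generic
/-! ### helpers -/

lemma tel {ν : ℕ → ℕ} (hν : Antitone ν) : ∀ n, ∑ t ∈ Finset.range n, (ν t - ν (t+1)) = ν 0 - ν n := by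
  intro n
  induction n with
  | zero => simp
  | succ n ih =>
    rw [Finset.sum_range_succ, ih]
    have h1 : ν (n+1) ≤ ν n := hν (by omega)
    have h2 : ν n ≤ ν 0 := hν (by omega)
    omega

lemma sum_forces {F : Finset ℕ} {f g : ℕ → ℕ} (hle : ∀ x ∈ F, f x ≤ g x)
    (hsum : ∑ x ∈ F, g x ≤ ∑ x ∈ F, f x) : ∀ x ∈ F, g x ≤ f x := by
  intro x hx
  by_contra hcon
  have := Finset.sum_lt_sum hle ⟨x, hx, by omega⟩
  omega

lemma reidx (g : ℕ → ℕ) : ∀ s a : ℕ, s ≤ a →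
    ∑ m ∈ Finset.Icc (a - s) a, g m = ∑ j ∈ Finset.range (s + 1), g (a - j) := by
  intro s
  induction s with
  | zero => intro a _; simp
  | succ s ih =>
    intro a hs
    have h1 : Finset.Icc (a - (s+1)) a = insert (a - (s+1)) (Finset.Icc (a - s) a) := by
      ext x; simp only [Finset.mem_Icc, Finset.mem_insert]; omega
    rw [h1, Finset.sum_insert (by simp only [Finset.mem_Icc]; omega),
      Finset.sum_range_succ, ih a (by omega)]
    omega

section Zero
variable {i a : ℕ} {ν : ℕ → ℕ} {T : ℕ → ℕ → ℕ}

/-- abbreviation for upper letter count -/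
noncomputable def upc (i a : ℕ) (ν : ℕ → ℕ) (T : ℕ → ℕ → ℕ) (m : ℕ) : ℕ :=
  ∑ r ∈ Finset.Ico a (2*a), rowc i a ν T r m

variable (hi : 1 ≤ i) (ha : 1 ≤ a) (hν : Antitone ν)
variable (hT : IsLRTab (rect i a) ν (rectContent i a) T)

section
include hν hT

lemma Z1 : ∀ r < a, i ≤ ν r := by
  intro r hr
  have := hT.1 r
  unfold rect at this
  rwa [if_pos hr] at this

lemma Z2 {r c : ℕ} {M : ℕ} (hM : ∀ r, M ≤ r → ν r = 0) (hr : r < a)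
    (hc : SkewCell (rect i a) ν r c) : T r c = r + 1 := by
  have hup := cell_letter_le_row hT hν hM hc
  have hic : i ≤ c := by
    rcases (cell_iff.mp hc).1 with hh | hh
    · exact hh
    · omega
  have hc0 : SkewCell (rect i a) ν 0 c := by
    rw [cell_iff]
    exact ⟨Or.inl hic, lt_of_lt_of_le (cell_iff.mp hc).2 (hν (Nat.zero_le r))⟩
  have := chain' hT hν hc0 hc (Nat.zero_le r)
  have := hT.2.2.1 0 c hc0
  omega

lemma Z3a {r : ℕ} {M : ℕ} (hM : ∀ r, M ≤ r → ν r = 0) (hr : r < a) :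
    rowc i a ν T r (r+1) + i = ν r := by
  have h1 : rowc i a ν T r (r+1) = ν r - rect i a r :=
    rowc_full r (r+1) (fun c hc => Z2 hν hT hM hr hc)
  unfold rect at h1
  rw [if_pos hr] at h1
  have := Z1 hν hT r hr
  omega

lemma Z3b {r k : ℕ} {M : ℕ} (hM : ∀ r, M ≤ r → ν r = 0) (hr : r < a) (hk : k ≠ r + 1) :
    rowc i a ν T r k = 0 :=
  rowc_zero r k (fun c hc => by rw [Z2 hν hT hM hr hc]; omega)

lemma Z4 {M : ℕ} (hM : ∀ r, M ≤ r → ν r = 0) : ∀ r, 2*a ≤ r → ν r = 0 := by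
  have h2a : ν (2*a) = 0 := by
    by_contra hcon
    have hcell : ∀ j, j ≤ a → SkewCell (rect i a) ν (a + j) 0 := by
      intro j hj
      rw [cell_iff]
      refine ⟨Or.inr (by omega), ?_⟩
      have : ν (2*a) ≤ ν (a + j) := hν (by omega)
      omega
    have hch := chain' hT hν (hcell 0 (by omega)) (hcell a (by omega)) (by omega)
    have h1 := hT.2.2.1 (a + 0) 0 (hcell 0 (by omega))
    have h2 := T_le hT hν hM (hcell a (by omega))
    omega
  intro r hr
  have := hν hr
  omega

lemma Z5 {M : ℕ} (hM : ∀ r, M ≤ r → ν r = 0) {m : ℕ} (hm1 : 1 ≤ m) (hma : m ≤ a) :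
    upc i a ν T m + ν (m - 1) = 2*i := by
  have hcont := content_rows hT hν (k := m) hm1 (R := 2*a) (Z4 hν hT hM) (by omega)
  have hval : rectContent i a m = i := by unfold rectContent; rw [if_pos ⟨hm1, hma⟩]
  rw [hval] at hcont
  rw [Finset.range_eq_Ico, ← Finset.sum_Ico_consecutive _ (Nat.zero_le a) (by omega)] at hcont
  have hlow : ∑ r ∈ Finset.Ico 0 a, rowc i a ν T r m + i = ν (m - 1) := by
    rw [← Finset.range_eq_Ico]
    rw [Finset.sum_eq_single_of_mem (m - 1) (by simp; omega)
      (fun r hr hne => Z3b hν hT hM (by simp at hr; omega) (by omega))]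
    have h3 := Z3a (r := m - 1) hν hT hM (by omega)
    rw [show m - 1 + 1 = m by omega] at h3
    exact h3
  unfold upc
  omega

/-- letters in row `a+j` are at least `j+1`: vanishing of small letters -/
lemma ZC {j m : ℕ} (hm : m ≤ j) : rowc i a ν T (a + j) m = 0 := by
  apply rowc_zero
  intro c hc hval
  have hcell_a : SkewCell (rect i a) ν a c := by
    rw [cell_iff]
    exact ⟨Or.inr (le_refl a), lt_of_lt_of_le (cell_iff.mp hc).2 (hν (by omega))⟩
  have := chain' hT hν hcell_a hc (by omega)
  have := hT.2.2.1 a c hcell_a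
  omega

lemma ZCa {j m : ℕ} {M : ℕ} (hM : ∀ r, M ≤ r → ν r = 0) (hm : a + 1 ≤ m) :
    rowc i a ν T (a + j) m = 0 := by
  apply rowc_zero
  intro c hc hval
  have := T_le hT hν hM hc
  omega

end
end Zero
section Zero2
variable {i a : ℕ} {ν : ℕ → ℕ} {T : ℕ → ℕ → ℕ}

/-- height of column `c` in the upper region (rows `≥ a`) -/
def Hgt (a : ℕ) (ν : ℕ → ℕ) (c : ℕ) : ℕ :=
  ((Finset.range a).filter (fun j => c < ν (a + j))).card

lemma filter_lt_card (n h : ℕ) : ((Finset.range n).filter (fun j => j < h)).card = min h n := by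
  rw [show (Finset.range n).filter (fun j => j < h) = Finset.range (min h n) by
    ext j; simp only [Finset.mem_filter, Finset.mem_range, lt_min_iff]; tauto]
  simp

variable (hi : 1 ≤ i) (ha : 1 ≤ a) (hν : Antitone ν)
variable (hT : IsLRTab (rect i a) ν (rectContent i a) T)

section
include hν

lemma Hgt_le : Hgt a ν c ≤ a :=
  le_trans (Finset.card_filter_le _ _) (by simp)

lemma Z6a (h2a : ∀ r, 2*a ≤ r → ν r = 0) (c : ℕ) :
    ∀ j, j < Hgt a ν c ↔ c < ν (a + j) := by
  intro j
  constructor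
  · intro hj
    by_contra hcon
    have hsub : (Finset.range a).filter (fun x => c < ν (a + x)) ⊆ Finset.range j := by
      intro x hx
      simp only [Finset.mem_filter, Finset.mem_range] at hx ⊢
      by_contra hxj
      have : ν (a + x) ≤ ν (a + j) := hν (by omega)
      omega
    have := Finset.card_le_card hsub
    unfold Hgt at hj
    simp only [Finset.card_range] at this
    omega
  · intro hj
    have hja : j < a := by
      by_contra hcon
      have := h2a (a + j) (by omega)
      omega
    have hsub : Finset.range (j + 1) ⊆ (Finset.range a).filter (fun x => c < ν (a + x)) := by
      intro x hx
      simp only [Finset.mem_range] at hx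
      simp only [Finset.mem_filter, Finset.mem_range]
      have : ν (a + j) ≤ ν (a + x) := hν (by omega)
      constructor
      · omega
      · omega
    have := Finset.card_le_card hsub
    unfold Hgt
    simp only [Finset.card_range] at this
    omega

include hT

lemma Z6d {j c : ℕ} (hc : SkewCell (rect i a) ν (a + j) c) : j + 1 ≤ T (a + j) c := by
  have hcell_a : SkewCell (rect i a) ν a c := by
    rw [cell_iff]
    exact ⟨Or.inr (le_refl a), lt_of_lt_of_le (cell_iff.mp hc).2 (hν (by omega))⟩
  have := chain' hT hν hcell_a hc (by omega)
  have := hT.2.2.1 a c hcell_a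
  omega

lemma Z6c {M : ℕ} (hM : ∀ r, M ≤ r → ν r = 0) (h2a : ∀ r, 2*a ≤ r → ν r = 0)
    {j c : ℕ} (hc : SkewCell (rect i a) ν (a + j) c) :
    T (a + j) c + Hgt a ν c ≤ a + 1 + j := by
  set H := Hgt a ν c with hH
  have hjH : j < H := (Z6a hν h2a c j).mpr (cell_iff.mp hc).2
  have htopc : c < ν (a + (H - 1)) := (Z6a hν h2a c (H - 1)).mp (by omega)
  have htop : SkewCell (rect i a) ν (a + (H - 1)) c := by
    rw [cell_iff]; exact ⟨Or.inr (by omega), htopc⟩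
  have hchain := chain' hT hν hc htop (by omega)
  have hle := T_le hT hν hM htop
  omega

/-- the key column-counting inequality: letters `≥ a - s` in the upper region -/
lemma Z7 {M : ℕ} (hM : ∀ r, M ≤ r → ν r = 0) (h2a : ∀ r, 2*a ≤ r → ν r = 0)
    {s : ℕ} (hs : s < a) :
    ∑ m ∈ Finset.Icc (a - s) a, upc i a ν T m ≤ ∑ j ∈ Finset.range (s + 1), ν (a + j) := by
  classical
  set P : Set (ℕ × ℕ) :=
    {p : ℕ × ℕ | a ≤ p.1 ∧ SkewCell (rect i a) ν p.1 p.2 ∧ a - s ≤ T p.1 p.2} with hP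
  have hPfin : P.Finite := fin_planar hν hM (by rintro p ⟨_, hp, _⟩; exact hp.2)
  -- step 1 : P.ncard = LHS
  have hstep1 : P.ncard = ∑ m ∈ Finset.Icc (a - s) a, upc i a ν T m := by
    rw [ncard_fiber hPfin (fun p => T p.1 p.2) (Finset.Icc (a - s) a)
      (by rintro p ⟨h1, h2, h3⟩
          simp only [Finset.mem_Icc]
          exact ⟨h3, T_le hT hν hM h2⟩)]
    refine Finset.sum_congr rfl fun m hm => ?_
    simp only [Finset.mem_Icc] at hm
    have hseteq : {x ∈ P | T x.1 x.2 = m}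
        = {p : ℕ × ℕ | a ≤ p.1 ∧ SkewCell (rect i a) ν p.1 p.2 ∧ T p.1 p.2 = m} := by
      ext p
      simp only [hP, Set.mem_setOf_eq, Set.mem_sep_iff]
      constructor
      · rintro ⟨⟨h1, h2, h3⟩, h4⟩; exact ⟨h1, h2, h4⟩
      · rintro ⟨h1, h2, h3⟩; exact ⟨⟨h1, h2, by omega⟩, h3⟩
    rw [hseteq]
    -- strip rows
    rw [ncard_rows (fin_planar hν hM (by rintro p ⟨_, hp, _⟩; exact hp.2)) (2*a)
      (by rintro ⟨r, c⟩ ⟨h1, h2, h3⟩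
          dsimp only at h1 h2 h3 ⊢
          have hc2 := (cell_iff.mp h2).2
          by_contra hcon
          have := h2a r (by omega)
          omega)]
    unfold upc
    rw [Finset.range_eq_Ico, ← Finset.sum_Ico_consecutive _ (Nat.zero_le a) (by omega)]
    have hzero : ∑ r ∈ Finset.Ico 0 a, {c | (r, c) ∈ {p : ℕ × ℕ | a ≤ p.1 ∧
        SkewCell (rect i a) ν p.1 p.2 ∧ T p.1 p.2 = m}}.ncard = 0 := by
      apply Finset.sum_eq_zero
      intro r hr
      simp only [Finset.mem_Ico] at hr
      rw [show {c | (r, c) ∈ {p : ℕ × ℕ | a ≤ p.1 ∧ SkewCell (rect i a) ν p.1 p.2 ∧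
          T p.1 p.2 = m}} = ∅ by ext c; simp only [Set.mem_setOf_eq,
            Set.mem_empty_iff_false, iff_false]; rintro ⟨h1, _, _⟩; omega]
      simp
    rw [hzero, zero_add]
    refine Finset.sum_congr rfl fun r hr => ?_
    simp only [Finset.mem_Ico] at hr
    unfold rowc
    congr 1
    ext c
    simp only [Set.mem_setOf_eq]
    constructor
    · rintro ⟨h1, h2, h3⟩; exact ⟨h2, h3⟩
    · rintro ⟨h2, h3⟩; exact ⟨by omega, h2, h3⟩
  -- step 2 : P.ncard = sum over columns
  have hstep2 : P.ncard = ∑ c ∈ Finset.range (ν a), {r | (r, c) ∈ P}.ncard := by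
    apply ncard_cols hPfin
    rintro ⟨r, c⟩ ⟨h1, h2, h3⟩
    dsimp only at h1 h2 h3 ⊢
    have hv := (cell_iff.mp h2).2
    have hmono : ν r ≤ ν a := hν h1
    omega
  -- step 3 : column bound
  have hstep3 : ∀ c, {r | (r, c) ∈ P}.ncard ≤ min (Hgt a ν c) (s + 1) := by
    intro c
    have hsub : {r | (r, c) ∈ P} ⊆
        {r | a + Hgt a ν c - (s + 1) ≤ r ∧ r < a + Hgt a ν c} := by
      rintro r ⟨h1, h2, h3⟩
      dsimp only at h1 h2 h3
      set j := r - a with hj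
      have hrj : r = a + j := by omega
      rw [hrj] at h2 h3
      have hjH : j < Hgt a ν c := (Z6a hν h2a c j).mpr (cell_iff.mp h2).2
      have hz6 := Z6c hν hT hM h2a h2
      simp only [Set.mem_setOf_eq]
      omega
    have hcard := Set.ncard_le_ncard hsub (fin_of_lt (a + Hgt a ν c) (fun r hr => hr.2))
    rw [setOf_Ico_ncard] at hcard
    -- also ≤ Hgt
    have hsub2 : {r | (r, c) ∈ P} ⊆ {r | a ≤ r ∧ r < a + Hgt a ν c} := by
      rintro r ⟨h1, h2, h3⟩
      dsimp only at h1 h2 h3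
      set j := r - a with hj
      have hrj : r = a + j := by omega
      rw [hrj] at h2
      have hjH : j < Hgt a ν c := (Z6a hν h2a c j).mpr (cell_iff.mp h2).2
      simp only [Set.mem_setOf_eq]
      omega
    have hcard2 := Set.ncard_le_ncard hsub2 (fin_of_lt (a + Hgt a ν c) (fun r hr => hr.2))
    rw [setOf_Ico_ncard] at hcard2
    omega
  -- step 4 : evaluate the min-sum
  have hstep4 : ∑ c ∈ Finset.range (ν a), min (Hgt a ν c) (s + 1)
      = ∑ j ∈ Finset.range (s + 1), ν (a + j) := by
    have hmin : ∀ c, min (Hgt a ν c) (s + 1)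
        = ((Finset.range (s + 1)).filter (fun j => c < ν (a + j))).card := by
      intro c
      rw [← filter_lt_card (s + 1) (Hgt a ν c)]
      congr 1
      apply Finset.filter_congr
      intro j _
      exact Z6a hν h2a c j
    calc ∑ c ∈ Finset.range (ν a), min (Hgt a ν c) (s + 1)
        = ∑ c ∈ Finset.range (ν a), ∑ j ∈ Finset.range (s + 1),
            (if c < ν (a + j) then 1 else 0) := by
          refine Finset.sum_congr rfl fun c _ => ?_
          rw [hmin c, Finset.card_filter]
      _ = ∑ j ∈ Finset.range (s + 1), ∑ c ∈ Finset.range (ν a),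
            (if c < ν (a + j) then 1 else 0) := Finset.sum_comm
      _ = ∑ j ∈ Finset.range (s + 1), ν (a + j) := by
          refine Finset.sum_congr rfl fun j _ => ?_
          rw [← Finset.card_filter]
          rw [show (Finset.range (ν a)).filter (fun c => c < ν (a + j))
              = Finset.range (min (ν (a + j)) (ν a)) by
            ext c; simp only [Finset.mem_filter, Finset.mem_range, lt_min_iff]; tauto]
          simp only [Finset.card_range]
          have : ν (a + j) ≤ ν a := hν (by omega)
          omega
  rw [← hstep1, hstep2, ← hstep4]
  exact Finset.sum_le_sum fun c _ => hstep3 c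

end
end Zero2
section Zero3
variable {i a : ℕ} {ν : ℕ → ℕ} {T : ℕ → ℕ → ℕ}
variable (hi : 1 ≤ i) (ha : 1 ≤ a) (hν : Antitone ν)
variable (hT : IsLRTab (rect i a) ν (rectContent i a) T)

lemma sum_shift (g : ℕ → ℕ) (a : ℕ) : ∀ n, ∑ r ∈ Finset.Ico a (a + n), g r = ∑ j ∈ Finset.range n, g (a + j) := by
  intro n
  induction n with
  | zero => simp
  | succ n ih =>
    rw [show a + (n + 1) = (a + n) + 1 from rfl, Finset.sum_Ico_succ_top (by omega), ih,
      Finset.sum_range_succ]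

lemma tel' {ν : ℕ → ℕ} (hν : Antitone ν) (d : ℕ) :
    ∀ n, ∑ k ∈ Finset.Icc (d + 2) (d + 1 + n), (ν (k - d - 2) - ν (k - d - 1)) = ν 0 - ν n := by
  intro n
  induction n with
  | zero => simp
  | succ n ih =>
    rw [show d + 1 + (n + 1) = (d + 1 + n) + 1 from by omega,
      Finset.sum_Icc_succ_top (by omega), ih,
      show d + 1 + n + 1 - d - 2 = n from by omega,
      show d + 1 + n + 1 - d - 1 = n + 1 from by omega]
    have h1 : ν (n + 1) ≤ ν n := hν (by omega)
    have h2 : ν n ≤ ν 0 := hν (by omega)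
    omega

section
include hν hT

lemma ZLOW {M : ℕ} (hM : ∀ r, M ≤ r → ν r = 0) {m : ℕ} (hm1 : 1 ≤ m) (hma : m ≤ a) :
    ∑ r ∈ Finset.range a, rowc i a ν T r m + i = ν (m - 1) := by
  rw [Finset.sum_eq_single_of_mem (m - 1) (by simp; omega)
    (fun r hr hne => Z3b hν hT hM (by simp at hr; omega) (by omega))]
  have h3 := Z3a (r := m - 1) hν hT hM (by omega)
  rw [show m - 1 + 1 = m by omega] at h3
  exact h3

/-- The main structure theorem: complementary pairs and exact row contents. -/
lemma Z8 {M : ℕ} (hM : ∀ r, M ≤ r → ν r = 0) :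
    ∀ s, s < a →
      (ν (a - 1 - s) + ν (a + s) = 2*i) ∧
      (rowc i a ν T (a + s) (s + 1) + ν 0 = 2*i) ∧
      (∀ m, s + 2 ≤ m → m ≤ a →
        rowc i a ν T (a + s) m + ν (m - s - 1) = ν (m - s - 2)) := by
  have h2a : ∀ r, 2*a ≤ r → ν r = 0 := Z4 hν hT hM
  intro s
  induction s using Nat.strong_induction_on with
  | _ s IH =>
    intro hs
    -- prefix sums over previous rows
    have hPS : ∀ σ m, σ ≤ s → σ + 1 ≤ m → m ≤ a →
        ∑ j ∈ Finset.range σ, rowc i a ν T (a + j) m + ν (m - 1) = ν (m - 1 - σ) := by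
      intro σ
      induction σ with
      | zero => intro m _ _ _; simp
      | succ σ ihσ =>
        intro m hσ hm1 hm2
        rw [Finset.sum_range_succ]
        have h1 := ihσ m (by omega) (by omega) hm2
        have h2 := (IH σ (by omega) (by omega)).2.2 m (by omega) hm2
        have e1 : m - 1 - σ = m - σ - 1 := by omega
        have e2 : m - 1 - (σ + 1) = m - σ - 2 := by omega
        rw [e2]
        rw [e1] at h1
        omega
    -- exact count of letter s+1 in row a+s
    have hA : rowc i a ν T (a + s) (s + 1) + ν 0 = 2*i := by
      have hcont := content_rows hT hν (k := s + 1) (by omega) (R := 2*a) h2a (by omega)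
      rw [show rectContent i a (s + 1) = i from by
        unfold rectContent; rw [if_pos ⟨by omega, by omega⟩]] at hcont
      rw [Finset.range_eq_Ico, ← Finset.sum_Ico_consecutive _ (Nat.zero_le a) (by omega),
        ← Finset.range_eq_Ico] at hcont
      have hlow := ZLOW hν hT hM (m := s + 1) (by omega) (by omega)
      simp only [Nat.add_sub_cancel] at hlow
      have hup : ∑ r ∈ Finset.Ico a (2*a), rowc i a ν T r (s + 1)
          = ∑ j ∈ Finset.range a, rowc i a ν T (a + j) (s + 1) := by
        rw [show 2*a = a + a from by omega]
        exact sum_shift (fun r => rowc i a ν T r (s + 1)) a a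
      have htail : ∑ j ∈ Finset.range a, rowc i a ν T (a + j) (s + 1)
          = ∑ j ∈ Finset.range (s + 1), rowc i a ν T (a + j) (s + 1) := by
        symm
        apply Finset.sum_subset (by intro x hx; simp at hx ⊢; omega)
        intro x hx hnx
        simp only [Finset.mem_range] at hx hnx
        exact ZC hν hT (by omega)
      have hsucc : ∑ j ∈ Finset.range (s + 1), rowc i a ν T (a + j) (s + 1)
          = ∑ j ∈ Finset.range s, rowc i a ν T (a + j) (s + 1)
            + rowc i a ν T (a + s) (s + 1) := Finset.sum_range_succ _ _
      have hps := hPS s (s + 1) (le_refl s) (by omega) (by omega)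
      simp only [Nat.add_sub_cancel, Nat.sub_self] at hps
      have hmono : ν s ≤ ν 0 := hν (by omega)
      omega
    -- upper bounds from the lattice condition
    have hUB : ∀ m, s + 2 ≤ m → m ≤ a →
        rowc i a ν T (a + s) m + ν (m - s - 1) ≤ ν (m - s - 2) := by
      intro m hm1 hm2
      have hlat := hT.2.2.2.2.2.2 (a + s) (m - 1) (by omega)
      rw [show m - 1 + 1 = m from by omega] at hlat
      have hL := Ncnt_rows (w := i) (q := a) (T := T) (M := M) hν hM (a + s) m
      have hRset : {p : ℕ × ℕ | p.1 + 1 ≤ a + s ∧ SkewCell (rect i a) ν p.1 p.2 ∧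
          T p.1 p.2 = m - 1} = {p : ℕ × ℕ | p.1 ≤ a + s - 1 ∧
          SkewCell (rect i a) ν p.1 p.2 ∧ T p.1 p.2 = m - 1} := by
        ext p
        simp only [Set.mem_setOf_eq]
        constructor
        · rintro ⟨h1, h2, h3⟩; exact ⟨by omega, h2, h3⟩
        · rintro ⟨h1, h2, h3⟩; exact ⟨by omega, h2, h3⟩
      have hR := Ncnt_rows (w := i) (q := a) (T := T) (M := M) hν hM (a + s - 1) (m - 1)
      rw [show a + s - 1 + 1 = a + s from by omega] at hR
      rw [hL, hRset, hR] at hlat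
      -- evaluate both sides
      have hsplitL : ∑ r ∈ Finset.range (a + s + 1), rowc i a ν T r m
          = ∑ r ∈ Finset.range a, rowc i a ν T r m
            + (∑ j ∈ Finset.range s, rowc i a ν T (a + j) m + rowc i a ν T (a + s) m) := by
        rw [show a + s + 1 = a + (s + 1) from by omega, Finset.range_eq_Ico,
          ← Finset.sum_Ico_consecutive _ (Nat.zero_le a) (by omega),
          ← Finset.range_eq_Ico, sum_shift (fun r => rowc i a ν T r m) a (s + 1),
          Finset.sum_range_succ]
      have hsplitR : ∑ r ∈ Finset.range (a + s), rowc i a ν T r (m - 1)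
          = ∑ r ∈ Finset.range a, rowc i a ν T r (m - 1)
            + ∑ j ∈ Finset.range s, rowc i a ν T (a + j) (m - 1) := by
        rw [Finset.range_eq_Ico, ← Finset.sum_Ico_consecutive _ (Nat.zero_le a) (by omega),
          ← Finset.range_eq_Ico, sum_shift (fun r => rowc i a ν T r (m - 1)) a s]
      have hlow1 := ZLOW hν hT hM (m := m) (by omega) hm2
      have hlow2 := ZLOW hν hT hM (m := m - 1) (by omega) (by omega)
      have hps1 := hPS s m (le_refl s) (by omega) hm2
      have hps2 := hPS s (m - 1) (le_refl s) (by omega) (by omega)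
      rw [show m - 1 - s = m - s - 1 from by omega] at hps1
      rw [show m - 1 - 1 - s = m - s - 2 from by omega] at hps2
      rw [show m - 1 - 1 = m - 2 from by omega] at hps2 hlow2
      omega
    -- row length, in Icc form
    have hSUM2 : rowc i a ν T (a + s) (s + 1)
        + ∑ k ∈ Finset.Icc (s + 2) a, rowc i a ν T (a + s) k = ν (a + s) := by
      have hrvs := row_val_sum hT hν hM (a + s)
      rw [show rect i a (a + s) = 0 from by unfold rect; rw [if_neg (by omega)],
        Nat.sub_zero] at hrvs
      have h1 : ∑ k ∈ Finset.Icc 1 a, rowc i a ν T (a + s) k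
          = ∑ k ∈ Finset.Icc (s + 1) a, rowc i a ν T (a + s) k := by
        symm
        apply Finset.sum_subset (by intro x hx; simp at hx ⊢; omega)
        intro x hx hnx
        simp only [Finset.mem_Icc] at hx hnx
        exact ZC hν hT (by omega)
      have h2 : ∑ k ∈ Finset.Icc (s + 1) a, rowc i a ν T (a + s) k
          = rowc i a ν T (a + s) (s + 1)
            + ∑ k ∈ Finset.Icc (s + 2) a, rowc i a ν T (a + s) k := by
        rw [← Finset.Ico_add_one_right_eq_Icc, Finset.sum_eq_sum_Ico_succ_bot (by omega),
          Finset.Ico_add_one_right_eq_Icc]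
      omega
    -- the telescoping bound
    have htel := tel' hν s (a - s - 1)
    rw [show s + 1 + (a - s - 1) = a from by omega] at htel
    have hBND : ∑ k ∈ Finset.Icc (s + 2) a, rowc i a ν T (a + s) k
        ≤ ν 0 - ν (a - s - 1) := by
      rw [← htel]
      apply Finset.sum_le_sum
      intro k hk
      simp only [Finset.mem_Icc] at hk
      have h3 := hUB k (by omega) (by omega)
      have h4 : ν (k - s - 1) ≤ ν (k - s - 2) := hν (by omega)
      omega
    -- pair upper bound
    have hPle : ν (a - 1 - s) + ν (a + s) ≤ 2*i := by
      have hm : ν (a - s - 1) ≤ ν 0 := hν (by omega)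
      rw [show a - 1 - s = a - s - 1 from by omega]
      omega
    -- pair lower bound via Z7
    have hPge : 2*i ≤ ν (a - 1 - s) + ν (a + s) := by
      have hz7 := Z7 hν hT hM h2a hs
      rw [reidx _ s a (by omega)] at hz7
      have he1 : ∑ j ∈ Finset.range (s + 1), (upc i a ν T (a - j) + ν (a - j - 1))
          = ∑ j ∈ Finset.range (s + 1), 2*i := by
        refine Finset.sum_congr rfl fun j hj => ?_
        simp only [Finset.mem_range] at hj
        have := Z5 hν hT hM (m := a - j) (by omega) (by omega)
        omega
      rw [Finset.sum_add_distrib] at he1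
      have he2 : ∑ j ∈ Finset.range s, (ν (a + j) + ν (a - 1 - j))
          = ∑ j ∈ Finset.range s, 2*i := by
        refine Finset.sum_congr rfl fun j hj => ?_
        simp only [Finset.mem_range] at hj
        have := (IH j (by omega) (by omega)).1
        omega
      rw [Finset.sum_add_distrib] at he2
      have he3 : ∑ j ∈ Finset.range (s + 1), ν (a - j - 1)
          = ∑ j ∈ Finset.range s, ν (a - 1 - j) + ν (a - s - 1) := by
        rw [Finset.sum_range_succ]
        congr 1
        refine Finset.sum_congr rfl fun j hj => ?_
        rw [show a - j - 1 = a - 1 - j from by omega]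
      have he4 : ∑ j ∈ Finset.range (s + 1), ν (a + j)
          = ∑ j ∈ Finset.range s, ν (a + j) + ν (a + s) := Finset.sum_range_succ _ _
      have he5 : ∑ j ∈ Finset.range (s + 1), (2*i : ℕ)
          = ∑ j ∈ Finset.range s, (2*i : ℕ) + 2*i := Finset.sum_range_succ _ _
      rw [show a - 1 - s = a - s - 1 from by omega]
      omega
    have hPair : ν (a - 1 - s) + ν (a + s) = 2*i := le_antisymm hPle hPge
    -- equalities forced
    refine ⟨hPair, hA, ?_⟩
    have hforce := sum_forces (F := Finset.Icc (s + 2) a)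
      (f := fun k => rowc i a ν T (a + s) k)
      (g := fun k => ν (k - s - 2) - ν (k - s - 1))
      (by intro k hk
          simp only [Finset.mem_Icc] at hk
          have h3 := hUB k (by omega) (by omega)
          omega)
      (by rw [htel]
          rw [show a - 1 - s = a - s - 1 from by omega] at hPair
          have hm : ν (a - s - 1) ≤ ν 0 := hν (by omega)
          omega)
    intro m hm1 hm2
    have h5 := hforce m (by simp only [Finset.mem_Icc]; omega)
    have hub := hUB m hm1 hm2
    have hmono : ν (m - s - 1) ≤ ν (m - s - 2) := hν (by omega)
    omega

end
end Zero3
section Emptiness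
variable {i a : ℕ} {ν : ℕ → ℕ}

/-- Case ν a = i : there is no LR tableau of shape ν/((i-1)^a) with content ((i+1)^a). -/
lemma emptyA (hi : 1 ≤ i) (ha : 1 ≤ a) (hν : Antitone ν) {M : ℕ}
    (hM : ∀ r, M ≤ r → ν r = 0) (hlow : ∀ r < a, i ≤ ν r) (heq : ν a = i) :
    {S : ℕ → ℕ → ℕ | IsLRTab (rect (i-1) a) ν (rectContent (i+1) a) S} = ∅ := by
  ext S
  simp only [Set.mem_setOf_eq, Set.mem_empty_iff_false, iff_false]
  intro hS
  have hcell : ∀ r, r ≤ a → SkewCell (rect (i-1) a) ν r (i - 1) := by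
    intro r hr
    rw [cell_iff]
    rcases Nat.lt_or_ge r a with hra | hra
    · exact ⟨Or.inl (le_refl _), by have := hlow r hra; omega⟩
    · have hra' : r = a := by omega
      rw [hra']
      exact ⟨Or.inr (le_refl _), by omega⟩
  have hch := chain' hS hν (hcell 0 (by omega)) (hcell a (le_refl a)) (Nat.zero_le a)
  have h1 := hS.2.2.1 0 (i - 1) (hcell 0 (by omega))
  have h2 := T_le hS hν hM (hcell a (le_refl a))
  omega

/-- Case ν a < i : there is no LR tableau of shape ν/(i^(a-1)) with content (i^(a+1)). -/
lemma emptyB (hi : 1 ≤ i) (ha : 1 ≤ a) (hν : Antitone ν) {M : ℕ}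
    (hM : ∀ r, M ≤ r → ν r = 0) (hlt : ν a < i) :
    {S : ℕ → ℕ → ℕ | IsLRTab (rect i (a-1)) ν (rectContent i (a+1)) S} = ∅ := by
  ext S
  simp only [Set.mem_setOf_eq, Set.mem_empty_iff_false, iff_false]
  intro hS
  set L : Set (ℕ × ℕ) :=
    {p : ℕ × ℕ | SkewCell (rect i (a-1)) ν p.1 p.2 ∧ S p.1 p.2 = a + 1} with hL
  have hcard : L.ncard = i := by
    rw [hS.2.2.2.2.2.1 (a + 1) (by omega)]
    unfold rectContent
    rw [if_pos ⟨by omega, le_refl _⟩]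
  have hrow : ∀ p ∈ L, a ≤ p.1 := by
    rintro p ⟨hc, hv⟩
    have := letter_le_row hS hν hM (a + 1) (by omega) p.1 ⟨p, le_refl _, hc, hv⟩
    omega
  have hinj : Set.InjOn (fun p : ℕ × ℕ => p.2) L := by
    rintro p ⟨hc, hv⟩ p' ⟨hc', hv'⟩ heq2
    simp only at heq2
    by_contra hne
    have hne1 : p.1 ≠ p'.1 := by
      intro h1
      exact hne (Prod.ext h1 heq2)
    rcases Nat.lt_or_ge p.1 p'.1 with hlt1 | hge1
    · have hc'' : SkewCell (rect i (a-1)) ν p'.1 p.2 := by rw [heq2]; exact hc'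
      have := chain' hS hν hc hc'' (by omega)
      have hv'' : S p'.1 p.2 = a + 1 := by rw [heq2]; exact hv'
      omega
    · have hc'' : SkewCell (rect i (a-1)) ν p.1 p'.2 := by rw [← heq2]; exact hc
      have := chain' hS hν hc' hc'' (by omega)
      have hv'' : S p.1 p'.2 = a + 1 := by rw [← heq2]; exact hv
      omega
  have himg : (fun p : ℕ × ℕ => p.2) '' L ⊆ {c : ℕ | c < ν a} := by
    rintro c ⟨p, hp, rfl⟩
    have h1 := (hp.1).2
    have h2 : ν p.1 ≤ ν a := hν (hrow p hp)
    simp only [Set.mem_setOf_eq]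
    omega
  have hle := Set.ncard_le_ncard himg (fin_of_lt (ν a) (fun c hc => hc))
  rw [Set.ncard_image_of_injOn hinj, hcard, setOf_lt_ncard] at hle
  omega

end Emptiness
/-! ### Witness for the B coefficient in case ν a = i -/

def PsiB (a : ℕ) (ν : ℕ → ℕ) (T : ℕ → ℕ → ℕ) : ℕ → ℕ → ℕ :=
  fun r c => if r + 1 < a then T r c else if r + 1 = a then T a c
    else if c < ν r then T r c + 1 else 0

section WitB
variable {i a : ℕ} {ν : ℕ → ℕ} {T : ℕ → ℕ → ℕ}
variable (hi : 1 ≤ i) (ha : 1 ≤ a) (hν : Antitone ν)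
variable (hT : IsLRTab (rect i a) ν (rectContent i a) T)
variable (hνa1 : ν (a - 1) = i) (hνa : ν a = i)

lemma cB_low {r c : ℕ} (hr : r + 1 < a) :
    SkewCell (rect i (a-1)) ν r c ↔ SkewCell (rect i a) ν r c := by
  rw [cell_iff, cell_iff]
  constructor
  · rintro ⟨h1, h2⟩
    refine ⟨?_, h2⟩
    rcases h1 with h | h
    · exact Or.inl h
    · omega
  · rintro ⟨h1, h2⟩
    refine ⟨?_, h2⟩
    rcases h1 with h | h
    · exact Or.inl h
    · omega

section
include hνa1 hνa

lemma cB_mid {c : ℕ} :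
    SkewCell (rect i (a-1)) ν (a-1) c ↔ SkewCell (rect i a) ν a c := by
  rw [cell_iff, cell_iff, hνa1, hνa]
  constructor
  · rintro ⟨h1, h2⟩; exact ⟨Or.inr (le_refl a), h2⟩
  · rintro ⟨h1, h2⟩; exact ⟨Or.inr (by omega), h2⟩

end

lemma cB_hi {r c : ℕ} (hr : a ≤ r) :
    SkewCell (rect i (a-1)) ν r c ↔ SkewCell (rect i a) ν r c := by
  rw [cell_iff, cell_iff]
  constructor
  · rintro ⟨h1, h2⟩; exact ⟨Or.inr (by omega), h2⟩
  · rintro ⟨h1, h2⟩; exact ⟨Or.inr (by omega), h2⟩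

lemma PsiB_low {r c : ℕ} (hr : r + 1 < a) : PsiB a ν T r c = T r c := by
  unfold PsiB; rw [if_pos hr]

lemma PsiB_mid {c : ℕ} (ha : 1 ≤ a) : PsiB a ν T (a-1) c = T a c := by
  unfold PsiB
  rw [if_neg (by omega), if_pos (by omega)]

lemma PsiB_hi {r c : ℕ} (ha : 1 ≤ a) (hr : a ≤ r) :
    PsiB a ν T r c = if c < ν r then T r c + 1 else 0 := by
  unfold PsiB
  rw [if_neg (by omega), if_neg (by omega)]

section
include hi ha hν hT hνa1 hνa

/-- Ψ is an LR tableau of the B shape: parts (1)-(5). -/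
lemma witB_basic {M : ℕ} (hM : ∀ r, M ≤ r → ν r = 0) :
    (∀ r, rect i (a-1) r ≤ ν r) ∧
    (∀ r c, ¬ SkewCell (rect i (a-1)) ν r c → PsiB a ν T r c = 0) ∧
    (∀ r c, SkewCell (rect i (a-1)) ν r c → 1 ≤ PsiB a ν T r c) ∧
    (∀ r c, SkewCell (rect i (a-1)) ν r c → SkewCell (rect i (a-1)) ν r (c + 1) →
      PsiB a ν T r c ≤ PsiB a ν T r (c + 1)) ∧
    (∀ r c, SkewCell (rect i (a-1)) ν r c → SkewCell (rect i (a-1)) ν (r + 1) c →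
      PsiB a ν T r c < PsiB a ν T (r + 1) c) := by
  have hlow : ∀ r < a, i ≤ ν r := Z1 hν hT
  refine ⟨?_, ?_, ?_, ?_, ?_⟩
  · intro r
    unfold rect
    split
    · next h => exact hlow r (by omega)
    · omega
  · -- zero off shape
    intro r c hnc
    rcases Nat.lt_or_ge (r + 1) a with h1 | h1
    · rw [PsiB_low h1]
      exact hT.2.1 r c (fun hc => hnc ((cB_low h1).mpr hc))
    rcases Nat.eq_or_lt_of_le h1 with h2 | h2
    · have hra : r = a - 1 := by omega
      subst hra
      rw [PsiB_mid ha]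
      exact hT.2.1 a c (fun hc => hnc ((cB_mid hνa1 hνa).mpr hc))
    · have hra : a ≤ r := by omega
      rw [PsiB_hi ha hra, if_neg]
      intro hcc
      exact hnc (by rw [cell_iff]; exact ⟨Or.inr (by omega), hcc⟩)
  · -- positive on cells
    intro r c hc
    rcases Nat.lt_or_ge (r + 1) a with h1 | h1
    · rw [PsiB_low h1]
      exact hT.2.2.1 r c ((cB_low h1).mp hc)
    rcases Nat.eq_or_lt_of_le h1 with h2 | h2
    · have hra : r = a - 1 := by omega
      subst hra
      rw [PsiB_mid ha]
      exact hT.2.2.1 a c ((cB_mid hνa1 hνa).mp hc)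
    · have hra : a ≤ r := by omega
      rw [PsiB_hi ha hra, if_pos (cell_iff.mp hc).2]
      omega
  · -- rows weakly increasing
    intro r c hc hc'
    rcases Nat.lt_or_ge (r + 1) a with h1 | h1
    · rw [PsiB_low h1, PsiB_low h1]
      exact hT.2.2.2.1 r c ((cB_low h1).mp hc) ((cB_low h1).mp hc')
    rcases Nat.eq_or_lt_of_le h1 with h2 | h2
    · have hra : r = a - 1 := by omega
      subst hra
      rw [PsiB_mid ha, PsiB_mid ha]
      exact hT.2.2.2.1 a c ((cB_mid hνa1 hνa).mp hc) ((cB_mid hνa1 hνa).mp hc')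
    · have hra : a ≤ r := by omega
      rw [PsiB_hi ha hra, PsiB_hi ha hra,
        if_pos (cell_iff.mp hc).2, if_pos (cell_iff.mp hc').2]
      have := hT.2.2.2.1 r c ((cB_hi hra).mp hc) ((cB_hi hra).mp hc')
      omega
  · -- columns strictly increasing
    intro r c hc hc'
    rcases Nat.lt_or_ge (r + 2) a with h1 | h1
    · rw [PsiB_low (by omega), PsiB_low (by omega)]
      exact hT.2.2.2.2.1 r c ((cB_low (by omega)).mp hc) ((cB_low (by omega)).mp hc')
    rcases Nat.eq_or_lt_of_le h1 with h2 | h2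
    · -- r + 2 = a : cells at rows a-2, a-1 : impossible (disjoint columns)
      exfalso
      have hr1 : r = a - 2 := by omega
      have hcc := cell_iff.mp hc
      have hcc' := cell_iff.mp hc'
      have hc1 : i ≤ c := by
        rcases hcc.1 with h | h
        · exact h
        · omega
      have hc2 : c < ν (a - 1) := by
        have : r + 1 = a - 1 := by omega
        rw [← this]
        exact hcc'.2
      rw [hνa1] at hc2
      omega
    rcases Nat.eq_or_lt_of_le h2 with h3 | h3
    · -- r + 1 = a - 1 + 1 = a, i.e. r = a - 1
      have hra : r = a - 1 := by omega
      have hr1a : r + 1 = a := by omega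
      subst hra
      rw [PsiB_mid ha, PsiB_hi ha (by omega), if_pos]
      · have hceq : SkewCell (rect i a) ν a c := (cB_mid hνa1 hνa).mp hc
        have hceq' : SkewCell (rect i a) ν (a - 1 + 1) c := by
          rw [cell_iff]
          exact ⟨Or.inr (by omega), (cell_iff.mp hc').2⟩
        rw [show a - 1 + 1 = a from by omega] at hceq' ⊢
        omega
      · exact (cell_iff.mp hc').2
    · -- a ≤ r
      have hra : a ≤ r := by omega
      rw [PsiB_hi ha hra, PsiB_hi ha (by omega),
        if_pos (cell_iff.mp hc).2, if_pos (cell_iff.mp hc').2]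
      have := hT.2.2.2.2.1 r c ((cB_hi hra).mp hc) ((cB_hi (by omega)).mp hc')
      omega

end
end WitB
section WitB2
variable {i a : ℕ} {ν : ℕ → ℕ} {T : ℕ → ℕ → ℕ}
variable (hi : 1 ≤ i) (ha : 1 ≤ a) (hν : Antitone ν)
variable (hT : IsLRTab (rect i a) ν (rectContent i a) T)
variable (hνa1 : ν (a - 1) = i) (hνa : ν a = i)

lemma shift_cut {Q : ℕ × ℕ → Prop} (ρ : ℕ) (hρ : 1 ≤ ρ) :
    {p : ℕ × ℕ | p.1 + 1 ≤ ρ ∧ Q p} = {p : ℕ × ℕ | p.1 ≤ ρ - 1 ∧ Q p} := by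
  ext p
  constructor
  · rintro ⟨h, hq⟩; exact ⟨by omega, hq⟩
  · rintro ⟨h, hq⟩; exact ⟨by omega, hq⟩

lemma cut_zero {Q : ℕ × ℕ → Prop} : {p : ℕ × ℕ | p.1 + 1 ≤ 0 ∧ Q p} = ∅ := by
  ext p
  simp only [Set.mem_setOf_eq, Set.mem_empty_iff_false, iff_false, not_and]
  omega

section
include hT

lemma rowc_letter0 (r : ℕ) : rowc i a ν T r 0 = 0 :=
  rowc_zero r 0 (fun c hc => by have := hT.2.2.1 r c hc; omega)

end

/-! row count identities for PsiB -/

lemma RB1 {r k : ℕ} (hr : r + 1 < a) :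
    rowc i (a-1) ν (PsiB a ν T) r k = rowc i a ν T r k := by
  unfold rowc
  congr 1
  ext c
  simp only [Set.mem_setOf_eq]
  rw [cB_low hr, PsiB_low hr]

section
include ha hνa1 hνa

lemma RB2 {k : ℕ} :
    rowc i (a-1) ν (PsiB a ν T) (a-1) k = rowc i a ν T a k := by
  unfold rowc
  congr 1
  ext c
  simp only [Set.mem_setOf_eq]
  rw [cB_mid hνa1 hνa, PsiB_mid ha]

end

lemma RB3 {r k : ℕ} (ha : 1 ≤ a) (hr : a ≤ r) (hk : 1 ≤ k) :
    rowc i (a-1) ν (PsiB a ν T) r k = rowc i a ν T r (k-1) := by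
  unfold rowc
  congr 1
  ext c
  simp only [Set.mem_setOf_eq]
  rw [cB_hi hr, PsiB_hi ha hr]
  constructor
  · rintro ⟨hc, hval⟩
    rw [if_pos (cell_iff.mp hc).2] at hval
    exact ⟨hc, by omega⟩
  · rintro ⟨hc, hval⟩
    rw [if_pos (cell_iff.mp hc).2]
    exact ⟨hc, by omega⟩

section
include hν hT

/-! partial sums of upper rows of `T` -/

lemma ZG1 {M : ℕ} (hM : ∀ r, M ≤ r → ν r = 0) :
    ∀ σ m, 1 ≤ m → m ≤ a → σ ≤ m - 1 →
    ∑ j ∈ Finset.range σ, rowc i a ν T (a + j) m + ν (m - 1) = ν (m - 1 - σ) := by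
  intro σ
  induction σ with
  | zero => intro m _ _ _; simp
  | succ σ ih =>
    intro m hm1 hm2 hσ
    rw [Finset.sum_range_succ]
    have h1 := ih m hm1 hm2 (by omega)
    have h2 := (Z8 hν hT hM σ (by omega)).2.2 m (by omega) hm2
    have e1 : m - 1 - σ = m - σ - 1 := by omega
    have e2 : m - 1 - (σ + 1) = m - σ - 2 := by omega
    rw [e2]
    rw [e1] at h1
    omega

lemma ZG2 {M : ℕ} (hM : ∀ r, M ≤ r → ν r = 0) :
    ∀ σ m, 1 ≤ m → m ≤ a → m ≤ σ →
    ∑ j ∈ Finset.range σ, rowc i a ν T (a + j) m + ν (m - 1) = 2*i := by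
  intro σ m hm1 hm2 hmσ
  obtain ⟨m', rfl⟩ : ∃ m', m = m' + 1 := ⟨m - 1, by omega⟩
  have htr : ∑ j ∈ Finset.range σ, rowc i a ν T (a + j) (m' + 1)
      = ∑ j ∈ Finset.range (m' + 1), rowc i a ν T (a + j) (m' + 1) := by
    symm
    apply Finset.sum_subset (by intro x hx; simp at hx ⊢; omega)
    intro x hx hnx
    simp only [Finset.mem_range] at hx hnx
    exact ZC hν hT (by omega)
  rw [htr, Finset.sum_range_succ]
  have h1 := ZG1 hν hT hM m' (m' + 1) hm1 hm2 (by omega)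
  have h2 := (Z8 hν hT hM m' (by omega)).2.1
  simp only [Nat.add_sub_cancel, Nat.sub_self] at h1 ⊢
  omega

/-! the `N₀` totals over rows `0..a` -/

include ha in
lemma N0one {M : ℕ} (hM : ∀ r, M ≤ r → ν r = 0) :
    ∑ r ∈ Finset.range (a + 1), rowc i a ν T r 1 = i := by
  rw [Finset.sum_range_succ]
  have h1 := ZLOW hν hT hM (m := 1) (le_refl 1) ha
  have h2 := (Z8 hν hT hM 0 (by omega)).2.1
  rw [Nat.add_zero] at h2
  simp only [Nat.zero_add] at h2
  simp only [Nat.sub_self] at h1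
  omega

include ha in
lemma N0mid {M : ℕ} (hM : ∀ r, M ≤ r → ν r = 0) (hνa1 : ν (a - 1) = i) :
    ∀ k, 2 ≤ k → k ≤ a + 1 →
    ∑ r ∈ Finset.range (a + 1), rowc i a ν T r k + i = ν (k - 2) := by
  intro k hk1 hk2
  rw [Finset.sum_range_succ]
  rcases Nat.lt_or_ge k (a + 1) with hka | hka
  · have h1 := ZLOW hν hT hM (m := k) (by omega) (by omega)
    have h2 := (Z8 hν hT hM 0 (by omega)).2.2 k (by omega) (by omega)
    rw [Nat.add_zero] at h2
    simp only [Nat.sub_zero] at h2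
    omega
  · have hka' : k = a + 1 := by omega
    subst hka'
    have h1 : ∑ r ∈ Finset.range a, rowc i a ν T r (a + 1) = 0 :=
      Finset.sum_eq_zero fun r hr => Z3b hν hT hM (by simp at hr; omega) (by simp at hr; omega)
    have h2 : rowc i a ν T a (a + 1) = 0 := by
      have := ZCa (j := 0) (m := a + 1) hν hT hM (le_refl _)
      rwa [Nat.add_zero] at this
    rw [h1, h2, show a + 1 - 2 = a - 1 from by omega, hνa1]
    omega

lemma N0big {M : ℕ} (hM : ∀ r, M ≤ r → ν r = 0) :
    ∀ k, a + 2 ≤ k → ∑ r ∈ Finset.range (a + 1), rowc i a ν T r k = 0 := by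
  intro k hk
  apply Finset.sum_eq_zero
  intro r hr
  simp only [Finset.mem_range] at hr
  rcases Nat.lt_or_ge r a with h | h
  · exact Z3b hν hT hM h (by omega)
  · have hra : r = a := by omega
    subst hra
    have := ZCa (j := 0) (m := k) hν hT hM (by omega)
    rwa [Nat.add_zero] at this

/-! master decomposition of PsiB row sums -/

include hi ha in
lemma MS {M : ℕ} (hM : ∀ r, M ≤ r → ν r = 0) (hνa1 : ν (a - 1) = i) (hνa : ν a = i) :
    ∀ k ρ, 1 ≤ k → a - 1 ≤ ρ →
    ∑ r ∈ Finset.range (ρ + 1), rowc i (a-1) ν (PsiB a ν T) r k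
      = ∑ r ∈ Finset.range (a + 1), rowc i a ν T r k
        + ∑ j ∈ Finset.range (ρ + 1 - a), rowc i a ν T (a + j) (k - 1) := by
  intro k ρ hk hρ
  have hsplit : ∑ r ∈ Finset.range (ρ + 1), rowc i (a-1) ν (PsiB a ν T) r k
      = ∑ r ∈ Finset.range a, rowc i (a-1) ν (PsiB a ν T) r k
        + ∑ j ∈ Finset.range (ρ + 1 - a), rowc i (a-1) ν (PsiB a ν T) (a + j) k := by
    have h0 : ∀ (f : ℕ → ℕ), ∑ r ∈ Finset.range (a + (ρ + 1 - a)), f r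
        = ∑ r ∈ Finset.range a, f r + ∑ j ∈ Finset.range (ρ + 1 - a), f (a + j) := by
      intro f
      rw [Finset.range_eq_Ico, ← Finset.sum_Ico_consecutive _ (Nat.zero_le a) (by omega),
        ← Finset.range_eq_Ico, sum_shift f a (ρ + 1 - a)]
    have h1 := h0 (fun r => rowc i (a-1) ν (PsiB a ν T) r k)
    rwa [show a + (ρ + 1 - a) = ρ + 1 from by omega] at h1
  have e1 : ∑ r ∈ Finset.range a, rowc i (a-1) ν (PsiB a ν T) r k
      = ∑ r ∈ Finset.range (a-1), rowc i (a-1) ν (PsiB a ν T) r k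
        + rowc i (a-1) ν (PsiB a ν T) (a-1) k := by
    have := Finset.sum_range_succ (fun r => rowc i (a-1) ν (PsiB a ν T) r k) (a-1)
    rwa [show a - 1 + 1 = a from by omega] at this
  have e2 : ∑ r ∈ Finset.range (a-1), rowc i (a-1) ν (PsiB a ν T) r k
      = ∑ r ∈ Finset.range (a-1), rowc i a ν T r k :=
    Finset.sum_congr rfl fun r hr => RB1 (by simp at hr; omega)
  have e3 : rowc i (a-1) ν (PsiB a ν T) (a-1) k = rowc i a ν T a k := RB2 ha hνa1 hνa
  have e4 : ∑ r ∈ Finset.range (a + 1), rowc i a ν T r k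
      = ∑ r ∈ Finset.range a, rowc i a ν T r k + rowc i a ν T a k :=
    Finset.sum_range_succ _ _
  have e5 : ∑ r ∈ Finset.range a, rowc i a ν T r k
      = ∑ r ∈ Finset.range (a-1), rowc i a ν T r k + rowc i a ν T (a-1) k := by
    have := Finset.sum_range_succ (fun r => rowc i a ν T r k) (a-1)
    rwa [show a - 1 + 1 = a from by omega] at this
  have e6 : rowc i a ν T (a-1) k = 0 := by
    apply rowc_empty_row
    unfold rect
    rw [if_pos (by omega), hνa1]
  have e7 : ∑ j ∈ Finset.range (ρ + 1 - a), rowc i (a-1) ν (PsiB a ν T) (a + j) k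
      = ∑ j ∈ Finset.range (ρ + 1 - a), rowc i a ν T (a + j) (k - 1) :=
    Finset.sum_congr rfl fun j _ => RB3 ha (by omega) hk
  omega

end
end WitB2
section WitB3
variable {i a : ℕ} {ν : ℕ → ℕ} {T : ℕ → ℕ → ℕ}
variable (hi : 1 ≤ i) (ha : 1 ≤ a) (hν : Antitone ν)
variable (hT : IsLRTab (rect i a) ν (rectContent i a) T)

section
include hi ha hν hT

lemma witB_content {M : ℕ} (hM : ∀ r, M ≤ r → ν r = 0)
    (hνa1 : ν (a - 1) = i) (hνa : ν a = i) :
    ∀ k, 1 ≤ k →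
    {p : ℕ × ℕ | SkewCell (rect i (a-1)) ν p.1 p.2 ∧ PsiB a ν T p.1 p.2 = k}.ncard
      = rectContent i (a+1) k := by
  intro k hk
  have h2a : ∀ r, 2*a ≤ r → ν r = 0 := Z4 hν hT hM
  have hset : {p : ℕ × ℕ | SkewCell (rect i (a-1)) ν p.1 p.2 ∧ PsiB a ν T p.1 p.2 = k}
      = {p : ℕ × ℕ | p.1 ≤ 2*a - 1 ∧ SkewCell (rect i (a-1)) ν p.1 p.2 ∧
          PsiB a ν T p.1 p.2 = k} := by
    ext p
    simp only [Set.mem_setOf_eq]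
    constructor
    · rintro ⟨hc, hv⟩
      refine ⟨?_, hc, hv⟩
      have := (cell_iff.mp hc).2
      by_contra hcon
      have := h2a p.1 (by omega)
      omega
    · rintro ⟨_, hc, hv⟩; exact ⟨hc, hv⟩
  rw [hset, Ncnt_rows (w := i) (q := a - 1) (M := 2*a) hν h2a (2*a - 1) k,
    show 2*a - 1 + 1 = 2*a from by omega]
  have hms := MS hi ha hν hT hM hνa1 hνa k (2*a - 1) hk (by omega)
  rw [show 2*a - 1 + 1 = 2*a from by omega] at hms
  rw [hms, show 2*a - a = a from by omega]
  rcases Nat.lt_or_ge k 2 with hk2 | hk2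
  · -- k = 1
    have hk1 : k = 1 := by omega
    subst hk1
    rw [N0one ha hν hT hM]
    have hz : ∑ j ∈ Finset.range a, rowc i a ν T (a + j) 0 = 0 :=
      Finset.sum_eq_zero fun j _ => rowc_letter0 hT (a + j)
    simp only [Nat.sub_self] at hz ⊢
    rw [hz]
    unfold rectContent
    rw [if_pos ⟨le_refl 1, by omega⟩]
    omega
  rcases le_or_gt k (a + 1) with hka | hka
  · -- 2 ≤ k ≤ a+1
    have h1 := N0mid ha hν hT hM hνa1 k hk2 hka
    have h2 := ZG2 hν hT hM a (k - 1) (by omega) (by omega) (by omega)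
    rw [show k - 1 - 1 = k - 2 from by omega] at h2
    have hval : rectContent i (a+1) k = i := by
      unfold rectContent; rw [if_pos ⟨by omega, by omega⟩]
    omega
  · -- k ≥ a + 2
    have h1 := N0big hν hT hM k (by omega)
    have h2 : ∑ j ∈ Finset.range a, rowc i a ν T (a + j) (k - 1) = 0 :=
      Finset.sum_eq_zero fun j _ => ZCa hν hT hM (by omega)
    have hval : rectContent i (a+1) k = 0 := by
      unfold rectContent; rw [if_neg (by omega)]
    omega

lemma witB_lattice {M : ℕ} (hM : ∀ r, M ≤ r → ν r = 0)
    (hνa1 : ν (a - 1) = i) (hνa : ν a = i) :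
    ∀ ρ k, 1 ≤ k →
    {p : ℕ × ℕ | p.1 ≤ ρ ∧ SkewCell (rect i (a-1)) ν p.1 p.2 ∧
        PsiB a ν T p.1 p.2 = k + 1}.ncard
      ≤ {p : ℕ × ℕ | p.1 + 1 ≤ ρ ∧ SkewCell (rect i (a-1)) ν p.1 p.2 ∧
        PsiB a ν T p.1 p.2 = k}.ncard := by
  intro ρ k hk
  have h2a : ∀ r, 2*a ≤ r → ν r = 0 := Z4 hν hT hM
  rw [Ncnt_rows (w := i) (q := a - 1) (M := 2*a) hν h2a ρ (k + 1)]
  rcases Nat.eq_zero_or_pos ρ with hρ0 | hρ0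
  · -- ρ = 0
    subst hρ0
    have hz : ∑ r ∈ Finset.range (0 + 1), rowc i (a-1) ν (PsiB a ν T) r (k + 1) = 0 := by
      rw [Finset.sum_range_succ, Finset.sum_range_zero]
      rcases Nat.lt_or_ge (0 + 1) a with h1 | h1
      · rw [RB1 h1]
        exact Nat.zero_add _ ▸ Z3b hν hT hM (by omega) (by omega)
      · have ha1 : a = 1 := by omega
        subst ha1
        rw [RB2 (le_refl 1) hνa1 hνa]
        have h2 := ZCa (j := 0) (m := k + 1) hν hT hM (by omega)
        rw [Nat.add_zero] at h2
        omega
    rw [hz]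
    exact Nat.zero_le _
  -- ρ ≥ 1
  rw [shift_cut ρ hρ0, Ncnt_rows (w := i) (q := a - 1) (M := 2*a) hν h2a (ρ - 1) k,
    show ρ - 1 + 1 = ρ from by omega]
  rcases Nat.lt_or_ge ρ (a - 1) with hcase | hcase
  · -- ρ ≤ a - 2 : transfer T's lattice
    have hLl : ∑ r ∈ Finset.range (ρ + 1), rowc i (a-1) ν (PsiB a ν T) r (k + 1)
        = ∑ r ∈ Finset.range (ρ + 1), rowc i a ν T r (k + 1) :=
      Finset.sum_congr rfl fun r hr => RB1 (by simp at hr; omega)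
    have hRr : ∑ r ∈ Finset.range ρ, rowc i (a-1) ν (PsiB a ν T) r k
        = ∑ r ∈ Finset.range ρ, rowc i a ν T r k :=
      Finset.sum_congr rfl fun r hr => RB1 (by simp at hr; omega)
    rw [hLl, hRr]
    have hlat := hT.2.2.2.2.2.2 ρ k hk
    rw [Ncnt_rows (w := i) (q := a) (M := M) hν hM ρ (k + 1)] at hlat
    rw [shift_cut ρ hρ0, Ncnt_rows (w := i) (q := a) (M := M) hν hM (ρ - 1) k,
      show ρ - 1 + 1 = ρ from by omega] at hlat
    exact hlat
  rcases Nat.eq_or_lt_of_le hcase with hcase2 | hcase2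
  · -- ρ = a - 1
    have hρa : ρ = a - 1 := hcase2.symm
    subst hρa
    have hms := MS hi ha hν hT hM hνa1 hνa (k + 1) (a - 1) (by omega) (le_refl _)
    rw [show a - 1 + 1 = a from by omega, show a - a = 0 from by omega,
      Finset.sum_range_zero] at hms
    have hlat := hT.2.2.2.2.2.2 a k hk
    rw [Ncnt_rows (w := i) (q := a) (M := M) hν hM a (k + 1)] at hlat
    rw [shift_cut a (by omega), Ncnt_rows (w := i) (q := a) (M := M) hν hM (a - 1) k,
      show a - 1 + 1 = a from by omega] at hlat
    have hRr : ∑ r ∈ Finset.range (a - 1), rowc i (a-1) ν (PsiB a ν T) r k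
        = ∑ r ∈ Finset.range (a - 1), rowc i a ν T r k :=
      Finset.sum_congr rfl fun r hr => RB1 (by simp at hr; omega)
    have e5 : ∑ r ∈ Finset.range a, rowc i a ν T r k
        = ∑ r ∈ Finset.range (a-1), rowc i a ν T r k + rowc i a ν T (a-1) k := by
      have := Finset.sum_range_succ (fun r => rowc i a ν T r k) (a-1)
      rwa [show a - 1 + 1 = a from by omega] at this
    have e6 : rowc i a ν T (a-1) k = 0 := by
      apply rowc_empty_row
      unfold rect
      rw [if_pos (by omega), hνa1]
    rw [show a - 1 + 1 = a from by omega]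
    omega
  · -- a ≤ ρ
    have hmsL := MS hi ha hν hT hM hνa1 hνa (k + 1) ρ (by omega) (by omega)
    rw [show k + 1 - 1 = k from by omega] at hmsL
    have hmsR := MS hi ha hν hT hM hνa1 hνa k (ρ - 1) hk (by omega)
    rw [show ρ - 1 + 1 = ρ from by omega] at hmsR
    rw [hmsL, hmsR]
    rcases le_or_gt k a with hka | hka
    · rcases Nat.eq_or_lt_of_le hk with hk1 | hk1
      · -- k = 1
        have hN1 := N0one ha hν hT hM
        have e0 : ∑ r ∈ Finset.range (a + 1), rowc i a ν T r k
            = ∑ r ∈ Finset.range (a + 1), rowc i a ν T r 1 := by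
          rw [← hk1]
        have hN2 := N0mid ha hν hT hM hνa1 (k + 1) (by omega) (by omega)
        rw [show k + 1 - 2 = k - 1 from by omega] at hN2
        have hS := ZG2 hν hT hM (ρ + 1 - a) k (by omega) (by omega) (by omega)
        have hS' : ∑ j ∈ Finset.range (ρ - a), rowc i a ν T (a + j) (k - 1) = 0 := by
          apply Finset.sum_eq_zero
          intro j _
          rw [show k - 1 = 0 from by omega]
          exact rowc_letter0 hT (a + j)
        omega
      · -- 2 ≤ k ≤ a
        have hN1 := N0mid ha hν hT hM hνa1 (k + 1) (by omega) (by omega)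
        rw [show k + 1 - 2 = k - 1 from by omega] at hN1
        have hN2 := N0mid ha hν hT hM hνa1 k (by omega) (by omega)
        rcases le_or_gt k (ρ + 1 - a) with hσ | hσ
        · have hS1 := ZG2 hν hT hM (ρ + 1 - a) k (by omega) hka hσ
          have hS2 := ZG2 hν hT hM (ρ - a) (k - 1) (by omega) (by omega) (by omega)
          rw [show k - 1 - 1 = k - 2 from by omega] at hS2
          omega
        · have hS1 := ZG1 hν hT hM (ρ + 1 - a) k (by omega) hka (by omega)
          have hS2 := ZG1 hν hT hM (ρ - a) (k - 1) (by omega) (by omega) (by omega)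
          rw [show k - 1 - 1 - (ρ - a) = k - 1 - (ρ + 1 - a) from by omega,
            show k - 1 - 1 = k - 2 from by omega] at hS2
          omega
    · -- k ≥ a + 1
      have hN1 := N0big hν hT hM (k + 1) (by omega)
      have hS1 : ∑ j ∈ Finset.range (ρ + 1 - a), rowc i a ν T (a + j) k = 0 :=
        Finset.sum_eq_zero fun j _ => ZCa hν hT hM (by omega)
      rw [hN1, hS1]
      omega

end
end WitB3
section FinTabs

lemma tabs_finite {w q wc h : ℕ} {ν : ℕ → ℕ} (hν : Antitone ν) {M : ℕ}
    (hM : ∀ r, M ≤ r → ν r = 0) :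
    {T : ℕ → ℕ → ℕ | IsLRTab (rect w q) ν (rectContent wc h) T}.Finite := by
  classical
  set C : Finset (ℕ × ℕ) := Finset.range M ×ˢ Finset.range (ν 0) with hC
  set recon : ({p : ℕ × ℕ // p ∈ C} → Fin (h + 1)) → (ℕ → ℕ → ℕ) :=
    fun f r c => if hc : (r, c) ∈ C then (f ⟨(r, c), hc⟩).val else 0 with hrecon
  apply Set.Finite.subset (Set.finite_range recon)
  intro T hT
  have hcellC : ∀ r c, SkewCell (rect w q) ν r c → (r, c) ∈ C := by
    intro r c hc
    have h2 := (cell_iff.mp hc).2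
    have hr : r < M := by
      by_contra hcon
      have := hM r (by omega)
      omega
    have : ν r ≤ ν 0 := hν (Nat.zero_le r)
    simp only [hC, Finset.mem_product, Finset.mem_range]
    omega
  have hbound : ∀ r c, T r c < h + 1 := by
    intro r c
    by_cases hc : SkewCell (rect w q) ν r c
    · have := T_le hT hν hM hc
      omega
    · rw [hT.2.1 r c hc]
      omega
  refine ⟨fun p => ⟨T p.1.1 p.1.2, hbound _ _⟩, ?_⟩
  funext r c
  simp only [hrecon]
  split
  · rfl
  · next hc => exact (hT.2.1 r c (fun hcell => hc (hcellC r c hcell))).symm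

end FinTabs

section WitBFinal
variable {i a : ℕ} {ν : ℕ → ℕ} {T : ℕ → ℕ → ℕ}

lemma witB (hi : 1 ≤ i) (ha : 1 ≤ a) (hν : Antitone ν)
    (hT : IsLRTab (rect i a) ν (rectContent i a) T)
    {M : ℕ} (hM : ∀ r, M ≤ r → ν r = 0)
    (hνa1 : ν (a - 1) = i) (hνa : ν a = i) :
    IsLRTab (rect i (a-1)) ν (rectContent i (a+1)) (PsiB a ν T) := by
  obtain ⟨b1, b2, b3, b4, b5⟩ := witB_basic hi ha hν hT hνa1 hνa hM
  exact ⟨b1, b2, b3, b4, b5,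
    fun k hk => witB_content hi ha hν hT hM hνa1 hνa k hk,
    fun ρ k hk => witB_lattice hi ha hν hT hM hνa1 hνa ρ k hk⟩

end WitBFinal
/-! ### The bijection for the A coefficient, case ν a < i -/

def PsiA (i a : ℕ) (T : ℕ → ℕ → ℕ) : ℕ → ℕ → ℕ :=
  fun r c => if r < a ∧ c = i - 1 then r + 1 else T r c

def PhiA (i a : ℕ) (S : ℕ → ℕ → ℕ) : ℕ → ℕ → ℕ :=
  fun r c => if r < a ∧ c = i - 1 then 0 else S r c

section BijA
variable {i a : ℕ} {ν : ℕ → ℕ}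
variable (hi : 1 ≤ i) (ha : 1 ≤ a) (hν : Antitone ν)
variable (hlow : ∀ r < a, i ≤ ν r) (hlt : ν a < i)

section
include hi hlow

lemma cA_col {r : ℕ} (hr : r < a) : SkewCell (rect (i-1) a) ν r (i-1) := by
  rw [cell_iff]
  exact ⟨Or.inl (le_refl _), by have := hlow r hr; omega⟩

lemma c0A {r c : ℕ} (hc : SkewCell (rect i a) ν r c) :
    SkewCell (rect (i-1) a) ν r c := by
  rw [cell_iff] at *
  refine ⟨?_, hc.2⟩
  rcases hc.1 with h | h
  · exact Or.inl (by omega)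
  · exact Or.inr h
end

section
include hν hlt

lemma noCol0 (r : ℕ) : ¬ SkewCell (rect i a) ν r (i-1) := by
  rw [cell_iff]
  rintro ⟨h1, h2⟩
  rcases h1 with h | h
  · omega
  · have : ν r ≤ ν a := hν h
    omega

lemma notColA_hi {r : ℕ} (hr : a ≤ r) : ¬ SkewCell (rect (i-1) a) ν r (i-1) := by
  rw [cell_iff]
  rintro ⟨h1, h2⟩
  have : ν r ≤ ν a := hν hr
  omega
end

lemma cA_split {r c : ℕ} (hc : SkewCell (rect (i-1) a) ν r c)
    (hnc : ¬ (r < a ∧ c = i - 1)) : SkewCell (rect i a) ν r c := by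
  rw [cell_iff] at *
  refine ⟨?_, hc.2⟩
  rcases Nat.lt_or_ge r a with hr | hr
  · rcases hc.1 with h | h
    · left
      have : c ≠ i - 1 := fun hh => hnc ⟨hr, hh⟩
      omega
    · omega
  · exact Or.inr hr

include hi ha hν hlow hlt in
/-- the forced column in any A-tableau -/
lemma A2 {S : ℕ → ℕ → ℕ} (hS : IsLRTab (rect (i-1) a) ν (rectContent (i+1) a) S)
    {M : ℕ} (hM : ∀ r, M ≤ r → ν r = 0) :
    ∀ r < a, S r (i-1) = r + 1 := by
  intro r hr
  have hup : S (a-1) (i-1) ≤ a := T_le hS hν hM (cA_col hi hlow (by omega))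
  have hch := chain' hS hν (cA_col hi hlow hr) (cA_col hi hlow (a := a) (by omega))
    (by omega : r ≤ a - 1)
  have hch0 := chain' hS hν (cA_col hi hlow (by omega : 0 < a)) (cA_col hi hlow hr)
    (Nat.zero_le r)
  have h1 := hS.2.2.1 0 (i-1) (cA_col hi hlow (by omega))
  omega

include hi ha hν hlow hlt in
/-- membership analysis for A-shape cells -/
lemma splitA_incl (U V : ℕ → ℕ → ℕ) (hcol : ∀ r < a, U r (i-1) = r + 1)
    (hoff : ∀ r c, SkewCell (rect i a) ν r c → U r c = V r c)
    (P : ℕ → Prop) {k : ℕ} (hk1 : 1 ≤ k) :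
    ∀ p : ℕ × ℕ, P p.1 ∧ SkewCell (rect (i-1) a) ν p.1 p.2 ∧ U p.1 p.2 = k →
      (P p.1 ∧ SkewCell (rect i a) ν p.1 p.2 ∧ V p.1 p.2 = k) ∨
        (p = (k-1, i-1) ∧ P (k-1) ∧ k ≤ a) := by
  rintro ⟨r, c⟩ ⟨hP, hc, hval⟩
  dsimp only at *
  by_cases hcond : r < a ∧ c = i - 1
  · right
    have h2 := hcol r hcond.1
    rw [hcond.2] at hval
    have hrk : r = k - 1 := by omega
    refine ⟨by rw [hcond.2, hrk], by rw [← hrk]; exact hP, by omega⟩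
  · left
    have h0 := cA_split hc hcond
    exact ⟨hP, h0, by rw [← hoff _ _ h0]; exact hval⟩

include hi ha hν hlow hlt in
lemma splitA_pos {M : ℕ} (hM : ∀ r, M ≤ r → ν r = 0)
    (U V : ℕ → ℕ → ℕ) (hcol : ∀ r < a, U r (i-1) = r + 1)
    (hoff : ∀ r c, SkewCell (rect i a) ν r c → U r c = V r c)
    (P : ℕ → Prop) {k : ℕ} (hk1 : 1 ≤ k) (hka : k ≤ a) (hP : P (k-1)) :
    {p : ℕ × ℕ | P p.1 ∧ SkewCell (rect (i-1) a) ν p.1 p.2 ∧ U p.1 p.2 = k}.ncard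
      = {p : ℕ × ℕ | P p.1 ∧ SkewCell (rect i a) ν p.1 p.2 ∧ V p.1 p.2 = k}.ncard + 1 := by
  have hseteq : {p : ℕ × ℕ | P p.1 ∧ SkewCell (rect (i-1) a) ν p.1 p.2 ∧ U p.1 p.2 = k}
      = {p : ℕ × ℕ | P p.1 ∧ SkewCell (rect i a) ν p.1 p.2 ∧ V p.1 p.2 = k}
        ∪ {((k-1 : ℕ), (i-1 : ℕ))} := by
    ext p
    simp only [Set.mem_setOf_eq, Set.mem_union, Set.mem_singleton_iff]
    constructor
    · intro hp
      rcases splitA_incl hi ha hν hlow hlt U V hcol hoff P hk1 p hp with h | h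
      · exact Or.inl h
      · exact Or.inr h.1
    · rintro (⟨h1, h2, h3⟩ | rfl)
      · exact ⟨h1, c0A hi hlow h2, by rw [hoff _ _ h2]; exact h3⟩
      · refine ⟨hP, cA_col hi hlow (by omega), ?_⟩
        have := hcol (k-1) (by omega)
        dsimp only
        omega
  rw [hseteq, Set.ncard_union_eq ?disj ?f1 ?f2, Set.ncard_singleton]
  case disj =>
    rw [Set.disjoint_singleton_right]
    rintro ⟨_, hc, _⟩
    exact noCol0 hν hlt (k-1) hc
  case f1 => exact fin_planar hν hM (by rintro p ⟨_, hp, _⟩; exact hp.2)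
  case f2 => exact Set.finite_singleton _

include hi ha hν hlow hlt in
lemma splitA_neg (U V : ℕ → ℕ → ℕ) (hcol : ∀ r < a, U r (i-1) = r + 1)
    (hoff : ∀ r c, SkewCell (rect i a) ν r c → U r c = V r c)
    (P : ℕ → Prop) {k : ℕ} (hk1 : 1 ≤ k) (hP : ¬ (P (k-1) ∧ k ≤ a)) :
    {p : ℕ × ℕ | P p.1 ∧ SkewCell (rect (i-1) a) ν p.1 p.2 ∧ U p.1 p.2 = k}.ncard
      = {p : ℕ × ℕ | P p.1 ∧ SkewCell (rect i a) ν p.1 p.2 ∧ V p.1 p.2 = k}.ncard := by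
  congr 1
  ext p
  simp only [Set.mem_setOf_eq]
  constructor
  · intro hp
    rcases splitA_incl hi ha hν hlow hlt U V hcol hoff P hk1 p hp with h | h
    · exact h
    · exact absurd ⟨h.2.1, h.2.2⟩ hP
  · rintro ⟨h1, h2, h3⟩
    exact ⟨h1, c0A hi hlow h2, by rw [hoff _ _ h2]; exact h3⟩

end BijA
section BijA2
variable {i a : ℕ} {ν : ℕ → ℕ}
variable (hi : 1 ≤ i) (ha : 1 ≤ a) (hν : Antitone ν)
variable (hlow : ∀ r < a, i ≤ ν r) (hlt : ν a < i)

include hi in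
lemma not_col_of_0cell {r c : ℕ} (hc : SkewCell (rect i a) ν r c) :
    ¬ (r < a ∧ c = i - 1) := by
  rintro ⟨h1, h2⟩
  rcases (cell_iff.mp hc).1 with h | h
  · omega
  · omega

include hi in
lemma PsiA_off {T : ℕ → ℕ → ℕ} {r c : ℕ} (hc : SkewCell (rect i a) ν r c) :
    PsiA i a T r c = T r c := by
  unfold PsiA
  rw [if_neg (not_col_of_0cell hi hc)]

include hi in
lemma PhiA_off {S : ℕ → ℕ → ℕ} {r c : ℕ} (hc : SkewCell (rect i a) ν r c) :
    PhiA i a S r c = S r c := by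
  unfold PhiA
  rw [if_neg (not_col_of_0cell hi hc)]

include hi ha hν hlow hlt in
lemma mapA1 {T : ℕ → ℕ → ℕ} (hT : IsLRTab (rect i a) ν (rectContent i a) T)
    {M : ℕ} (hM : ∀ r, M ≤ r → ν r = 0) :
    IsLRTab (rect (i-1) a) ν (rectContent (i+1) a) (PsiA i a T) := by
  have hcol : ∀ r < a, PsiA i a T r (i-1) = r + 1 := by
    intro r hr
    unfold PsiA
    rw [if_pos ⟨hr, rfl⟩]
  have hoff : ∀ r c, SkewCell (rect i a) ν r c → PsiA i a T r c = T r c :=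
    fun r c hc => PsiA_off hi hc
  have hvle : ∀ r c, SkewCell (rect (i-1) a) ν r c → PsiA i a T r c ≤ a := by
    intro r c hc
    unfold PsiA
    split
    · next hcond => omega
    · next hcond => exact T_le hT hν hM (cA_split hc hcond)
  refine ⟨?_, ?_, ?_, ?_, ?_, ?_, ?_⟩
  · intro r
    unfold rect
    split
    · next hr => have := hlow r (by omega); omega
    · omega
  · intro r c hnc
    unfold PsiA
    split
    · next hcond =>
      exfalso
      apply hnc
      rw [hcond.2]
      exact cA_col hi hlow hcond.1
    · next hcond =>
      exact hT.2.1 r c (fun h0 => hnc (c0A hi hlow h0))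
  · intro r c hc
    unfold PsiA
    split
    · omega
    · next hcond => exact hT.2.2.1 r c (cA_split hc hcond)
  · -- rows
    intro r c hc hc'
    by_cases h1 : r < a ∧ c = i - 1
    · have h2 : ¬ (r < a ∧ c + 1 = i - 1) := by omega
      unfold PsiA
      rw [if_pos h1, if_neg h2]
      have h0' : SkewCell (rect i a) ν r (c+1) := cA_split hc' h2
      have hc0 : SkewCell (rect i a) ν 0 (c+1) := by
        rw [cell_iff]
        rcases (cell_iff.mp h0').1 with h | h
        · exact ⟨Or.inl h, lt_of_lt_of_le (cell_iff.mp h0').2 (hν (Nat.zero_le r))⟩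
        · omega
      have := chain' hT hν hc0 h0' (Nat.zero_le r)
      have := hT.2.2.1 0 (c+1) hc0
      omega
    · by_cases h2 : r < a ∧ c + 1 = i - 1
      · exfalso
        rcases (cell_iff.mp hc).1 with h | h
        · omega
        · omega
      · unfold PsiA
        rw [if_neg h1, if_neg h2]
        exact hT.2.2.2.1 r c (cA_split hc h1) (cA_split hc' h2)
  · -- columns
    intro r c hc hc'
    by_cases h1 : r < a ∧ c = i - 1
    · rcases Nat.lt_or_ge (r+1) a with hr1 | hr1
      · unfold PsiA
        rw [if_pos h1, if_pos ⟨hr1, h1.2⟩]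
        omega
      · exfalso
        rw [h1.2] at hc'
        exact notColA_hi hν hlt (r := r + 1) (by omega) hc'
    · have h2 : ¬ (r + 1 < a ∧ c = i - 1) := by
        rintro ⟨hh1, hh2⟩
        rcases (cell_iff.mp hc).1 with h | h
        · exact h1 ⟨by omega, by omega⟩
        · omega
      unfold PsiA
      rw [if_neg h1, if_neg h2]
      exact hT.2.2.2.2.1 r c (cA_split hc h1) (cA_split hc' h2)
  · -- content
    intro k hk
    rcases le_or_gt k a with hka | hka
    · have hsp := splitA_pos hi ha hν hlow hlt hM (PsiA i a T) T hcol hoff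
        (fun _ => True) hk hka trivial
      have e1 : {p : ℕ × ℕ | (fun _ : ℕ => True) p.1 ∧ SkewCell (rect (i-1) a) ν p.1 p.2 ∧
          PsiA i a T p.1 p.2 = k} = {p : ℕ × ℕ | SkewCell (rect (i-1) a) ν p.1 p.2 ∧
          PsiA i a T p.1 p.2 = k} := by
        ext p; simp
      have e2 : {p : ℕ × ℕ | (fun _ : ℕ => True) p.1 ∧ SkewCell (rect i a) ν p.1 p.2 ∧
          T p.1 p.2 = k} = {p : ℕ × ℕ | SkewCell (rect i a) ν p.1 p.2 ∧
          T p.1 p.2 = k} := by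
        ext p; simp
      rw [e1, e2] at hsp
      rw [hsp, hT.2.2.2.2.2.1 k hk]
      unfold rectContent
      rw [if_pos ⟨hk, hka⟩, if_pos ⟨hk, hka⟩]
    · have hempty : {p : ℕ × ℕ | SkewCell (rect (i-1) a) ν p.1 p.2 ∧
          PsiA i a T p.1 p.2 = k} = ∅ := by
        ext p
        simp only [Set.mem_setOf_eq, Set.mem_empty_iff_false, iff_false, not_and]
        intro hc hval
        have := hvle p.1 p.2 hc
        omega
      rw [hempty]
      unfold rectContent
      rw [if_neg (by omega)]
      simp
  · -- lattice
    intro ρ k hk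
    rcases le_or_gt a k with hka | hka
    · have hempty : {p : ℕ × ℕ | p.1 ≤ ρ ∧ SkewCell (rect (i-1) a) ν p.1 p.2 ∧
          PsiA i a T p.1 p.2 = k + 1} = ∅ := by
        ext p
        simp only [Set.mem_setOf_eq, Set.mem_empty_iff_false, iff_false, not_and]
        intro _ hc hval
        have := hvle p.1 p.2 hc
        omega
      rw [hempty]
      simp
    · have hlat := hT.2.2.2.2.2.2 ρ k hk
      by_cases hkρ : k ≤ ρ
      · have hL := splitA_pos hi ha hν hlow hlt hM (PsiA i a T) T hcol hoff
          (fun r => r ≤ ρ) (k := k + 1) (by omega) (by omega) (by simpa using hkρ)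
        have hR := splitA_pos hi ha hν hlow hlt hM (PsiA i a T) T hcol hoff
          (fun r => r + 1 ≤ ρ) (k := k) hk (by omega) (by simp; omega)
        rw [hL, hR]
        omega
      · have hL := splitA_neg hi ha hν hlow hlt (PsiA i a T) T hcol hoff
          (fun r => r ≤ ρ) (k := k + 1) (by omega) (by simp; omega)
        have hR := splitA_neg hi ha hν hlow hlt (PsiA i a T) T hcol hoff
          (fun r => r + 1 ≤ ρ) (k := k) hk (by simp; omega)
        rw [hL, hR]
        exact hlat

end BijA2
section BijA3
variable {i a : ℕ} {ν : ℕ → ℕ}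
variable (hi : 1 ≤ i) (ha : 1 ≤ a) (hν : Antitone ν)
variable (hlow : ∀ r < a, i ≤ ν r) (hlt : ν a < i)

include hi ha hν hlow hlt in
lemma mapA2 {S : ℕ → ℕ → ℕ} (hS : IsLRTab (rect (i-1) a) ν (rectContent (i+1) a) S)
    {M : ℕ} (hM : ∀ r, M ≤ r → ν r = 0) :
    IsLRTab (rect i a) ν (rectContent i a) (PhiA i a S) := by
  have hcol : ∀ r < a, S r (i-1) = r + 1 := A2 hi ha hν hlow hlt hS hM
  have hoff : ∀ r c, SkewCell (rect i a) ν r c → S r c = PhiA i a S r c :=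
    fun r c hc => (PhiA_off hi hc).symm
  have hSle : ∀ r c, SkewCell (rect i a) ν r c → PhiA i a S r c ≤ a := by
    intro r c hc
    rw [PhiA_off hi hc]
    exact T_le hS hν hM (c0A hi hlow hc)
  refine ⟨?_, ?_, ?_, ?_, ?_, ?_, ?_⟩
  · intro r
    unfold rect
    split
    · next hr => exact hlow r hr
    · omega
  · intro r c hnc
    unfold PhiA
    split
    · rfl
    · next hcond =>
      exact hS.2.1 r c (fun hcA => hnc (cA_split hcA hcond))
  · intro r c hc
    rw [PhiA_off hi hc]
    exact hS.2.2.1 r c (c0A hi hlow hc)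
  · intro r c hc hc'
    rw [PhiA_off hi hc, PhiA_off hi hc']
    exact hS.2.2.2.1 r c (c0A hi hlow hc) (c0A hi hlow hc')
  · intro r c hc hc'
    rw [PhiA_off hi hc, PhiA_off hi hc']
    exact hS.2.2.2.2.1 r c (c0A hi hlow hc) (c0A hi hlow hc')
  · -- content
    intro k hk
    rcases le_or_gt k a with hka | hka
    · have hsp := splitA_pos hi ha hν hlow hlt hM S (PhiA i a S) hcol hoff
        (fun _ => True) hk hka trivial
      have e1 : {p : ℕ × ℕ | (fun _ : ℕ => True) p.1 ∧ SkewCell (rect (i-1) a) ν p.1 p.2 ∧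
          S p.1 p.2 = k} = {p : ℕ × ℕ | SkewCell (rect (i-1) a) ν p.1 p.2 ∧
          S p.1 p.2 = k} := by
        ext p; simp
      have e2 : {p : ℕ × ℕ | (fun _ : ℕ => True) p.1 ∧ SkewCell (rect i a) ν p.1 p.2 ∧
          PhiA i a S p.1 p.2 = k} = {p : ℕ × ℕ | SkewCell (rect i a) ν p.1 p.2 ∧
          PhiA i a S p.1 p.2 = k} := by
        ext p; simp
      rw [e1, e2] at hsp
      have hcont := hS.2.2.2.2.2.1 k hk
      rw [hsp] at hcont
      have hval : rectContent (i+1) a k = i + 1 := by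
        unfold rectContent; rw [if_pos ⟨hk, hka⟩]
      have hval2 : rectContent i a k = i := by
        unfold rectContent; rw [if_pos ⟨hk, hka⟩]
      omega
    · have hempty : {p : ℕ × ℕ | SkewCell (rect i a) ν p.1 p.2 ∧
          PhiA i a S p.1 p.2 = k} = ∅ := by
        ext p
        simp only [Set.mem_setOf_eq, Set.mem_empty_iff_false, iff_false, not_and]
        intro hc hval
        have := hSle p.1 p.2 hc
        omega
      rw [hempty]
      unfold rectContent
      rw [if_neg (by omega)]
      simp
  · -- lattice
    intro ρ k hk
    rcases le_or_gt a k with hka | hka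
    · have hempty : {p : ℕ × ℕ | p.1 ≤ ρ ∧ SkewCell (rect i a) ν p.1 p.2 ∧
          PhiA i a S p.1 p.2 = k + 1} = ∅ := by
        ext p
        simp only [Set.mem_setOf_eq, Set.mem_empty_iff_false, iff_false, not_and]
        intro _ hc hval
        have := hSle p.1 p.2 hc
        omega
      rw [hempty]
      simp
    · have hlat := hS.2.2.2.2.2.2 ρ k hk
      by_cases hkρ : k ≤ ρ
      · have hL := splitA_pos hi ha hν hlow hlt hM S (PhiA i a S) hcol hoff
          (fun r => r ≤ ρ) (k := k + 1) (by omega) (by omega) (by simpa using hkρ)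
        have hR := splitA_pos hi ha hν hlow hlt hM S (PhiA i a S) hcol hoff
          (fun r => r + 1 ≤ ρ) (k := k) hk (by omega) (by simp; omega)
        rw [hL, hR] at hlat
        omega
      · have hL := splitA_neg hi ha hν hlow hlt S (PhiA i a S) hcol hoff
          (fun r => r ≤ ρ) (k := k + 1) (by omega) (by simp; omega)
        have hR := splitA_neg hi ha hν hlow hlt S (PhiA i a S) hcol hoff
          (fun r => r + 1 ≤ ρ) (k := k) hk (by simp; omega)
        rw [hL, hR] at hlat
        exact hlat

include hi ha hν hlow hlt in
lemma Aset_card {M : ℕ} (hM : ∀ r, M ≤ r → ν r = 0) :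
    {S : ℕ → ℕ → ℕ | IsLRTab (rect (i-1) a) ν (rectContent (i+1) a) S}.ncard
      = {T : ℕ → ℕ → ℕ | IsLRTab (rect i a) ν (rectContent i a) T}.ncard := by
  have himg : {S : ℕ → ℕ → ℕ | IsLRTab (rect (i-1) a) ν (rectContent (i+1) a) S}
      = PsiA i a '' {T : ℕ → ℕ → ℕ | IsLRTab (rect i a) ν (rectContent i a) T} := by
    ext S
    simp only [Set.mem_setOf_eq, Set.mem_image]
    constructor
    · intro hS
      refine ⟨PhiA i a S, mapA2 hi ha hν hlow hlt hS hM, ?_⟩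
      funext r c
      unfold PsiA PhiA
      by_cases hcond : r < a ∧ c = i - 1
      · rw [if_pos hcond]
        have := A2 hi ha hν hlow hlt hS hM r hcond.1
        rw [hcond.2]
        omega
      · rw [if_neg hcond, if_neg hcond]
    · rintro ⟨T, hT, rfl⟩
      exact mapA1 hi ha hν hlow hlt hT hM
  rw [himg]
  apply Set.ncard_image_of_injOn
  intro T hT T' hT' heq
  simp only [Set.mem_setOf_eq] at hT hT'
  funext r c
  by_cases hcond : r < a ∧ c = i - 1
  · have h1 : T r c = 0 := by
      apply hT.2.1
      rw [hcond.2]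
      exact noCol0 hν hlt r
    have h2 : T' r c = 0 := by
      apply hT'.2.1
      rw [hcond.2]
      exact noCol0 hν hlt r
    rw [h1, h2]
  · have := congrFun (congrFun heq r) c
    unfold PsiA at this
    rwa [if_neg hcond, if_neg hcond] at this

end BijA3
end LRD

/-- Dichotomy for rectangles: for `i, a ≥ 1` and a partition `ν` with
`c^ν_{(i^a),(i^a)} = 1`, exactly one of `c^ν_{((i-1)^a),((i+1)^a)} = 1` and
`c^ν_{(i^{a-1}),(i^{a+1})} = 1` holds:
`c^ν_{((i-1)^a),((i+1)^a)} = 1 ↔ c^ν_{(i^{a-1}),(i^{a+1})} = 0`. -/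
theorem lr_rectangle_dichotomy (i a : ℕ) (hi : 1 ≤ i) (ha : 1 ≤ a)
    (ν : ℕ → ℕ) (hν : Antitone ν) (hfin : ∃ M, ∀ r, M ≤ r → ν r = 0)
    (h : lrCoeff (rect i a) (rectContent i a) ν = 1) :
    lrCoeff (rect (i - 1) a) (rectContent (i + 1) a) ν = 1 ↔
      lrCoeff (rect i (a - 1)) (rectContent i (a + 1)) ν = 0 := by
  obtain ⟨M, hM⟩ := hfin
  have hne : {T : ℕ → ℕ → ℕ | IsLRTab (rect i a) ν (rectContent i a) T}.Nonempty := by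
    apply Set.nonempty_of_ncard_ne_zero
    unfold lrCoeff at h
    omega
  obtain ⟨T0, hT0⟩ := hne
  simp only [Set.mem_setOf_eq] at hT0
  have hlow : ∀ r < a, i ≤ ν r := LRD.Z1 hν hT0
  have hpair0 := (LRD.Z8 hν hT0 hM 0 (by omega)).1
  rw [Nat.sub_zero, Nat.add_zero] at hpair0
  have hale : ν a ≤ i := by
    have : ν a ≤ ν (a - 1) := hν (by omega)
    omega
  by_cases hcase : ν a = i
  · -- case ν a = i : A coefficient vanishes, B coefficient is nonzero
    have hν1 : ν (a - 1) = i := by omega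
    have hA0 : lrCoeff (rect (i - 1) a) (rectContent (i + 1) a) ν = 0 := by
      unfold lrCoeff
      rw [LRD.emptyA hi ha hν hM hlow hcase]
      simp
    have hBne : lrCoeff (rect i (a - 1)) (rectContent i (a + 1)) ν ≠ 0 := by
      unfold lrCoeff
      have hfinB := LRD.tabs_finite (w := i) (q := a - 1) (wc := i) (h := a + 1) hν hM
      have hwit := LRD.witB hi ha hν hT0 hM hν1 hcase
      have := (Set.ncard_pos hfinB).mpr ⟨_, hwit⟩
      omega
    constructor
    · intro h1
      exfalso
      omega
    · intro h1
      exact absurd h1 hBne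
  · -- case ν a < i : A coefficient equals the original, B coefficient vanishes
    have hlt : ν a < i := by omega
    have hA1 : lrCoeff (rect (i - 1) a) (rectContent (i + 1) a) ν = 1 := by
      unfold lrCoeff at h ⊢
      rw [LRD.Aset_card hi ha hν hlow hlt hM]
      exact h
    have hB0 : lrCoeff (rect i (a - 1)) (rectContent i (a + 1)) ν = 0 := by
      unfold lrCoeff
      rw [LRD.emptyB hi ha hν hM hlt]
      simp
    exact ⟨fun _ => hB0, fun _ => hA1⟩
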